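/- arXiv:2010.16384 — 12 statements merged into one kernel-verified Lean document; each statement's English description precedes it below -/
import Mathlib

section
/- For every integer n ≥ 3, there does not exist a random assignment mechanism that is simultaneously strategy-proof, envy-free, and ex-post efficient. -/
/-!
Embed three agents into `3 + m` agents: the extra `m` agents rank the extra `m` objects first, the
first three agents rank the first three objects first. At such a profile every Pareto-optimal
assignment gives the extra objects to the extra agents (an extra agent holding a first object and a
first agent holding an extra object would both gain by swapping), so restricting a mechanism to the
first three agents and objects preserves strategy-proofness, envy-freeness and ex-post efficiency.

For three agents and objects `a b c`, compare the profiles `(abc, abc, bac)`, `(abc, acb, bac)` and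
`(abc, acb, abc)`. In the first, ex-post efficiency keeps `a` away from agent 2 and envy-freeness
splits it equally between agents 0 and 1. By strategy-proofness agent 1 still gets `a` with
probability `1/2` in the second profile, which caps agent 2's probability of `{a, b}` at `3/4`
there. In the third profile ex-post efficiency and envy-freeness force agent 2's probability of
`{a, b}` up to at least `5/6`, so in the second profile agent 2 gains by reporting `abc`.
-/

open Finset

/-- A preference over `n` objects, encoded by its rank function:
`r a` is the (0-based) rank of object `a`; object `a` is strictly preferred to `b`
iff `r a < r b`.  The `k`-th ranked object (0-based) is `r.symm k`. -/
abbrev Pref (n : ℕ) := Fin n ≃ Fin n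

/-- The total probability that allocation `p` assigns to the upper contour set of `a`
(the objects weakly preferred to `a`) under preference `r`. -/
def upperSum {n : ℕ} (r : Pref n) (p : Fin n → ℝ) (a : Fin n) : ℝ :=
  ∑ o ∈ Finset.univ.filter (fun o => r o ≤ r a), p o

/-- First-order stochastic dominance of `p` over `q` with respect to preference `r`. -/
def StochDom {n : ℕ} (r : Pref n) (p q : Fin n → ℝ) : Prop :=
  ∀ a : Fin n, upperSum r q a ≤ upperSum r p a

/-- A random assignment: a doubly stochastic matrix. -/
def IsRandomAssignment {n : ℕ} (P : Matrix (Fin n) (Fin n) ℝ) : Prop :=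
  (∀ i a, 0 ≤ P i a) ∧ (∀ i, ∑ a, P i a = 1) ∧ (∀ a, ∑ i, P i a = 1)

/-- A mechanism maps every preference profile to a random assignment. -/
def IsMechanism {n : ℕ} (φ : (Fin n → Pref n) → Matrix (Fin n) (Fin n) ℝ) : Prop :=
  ∀ prof, IsRandomAssignment (φ prof)

/-- Strategy-proofness: no agent can ever benefit (in the stochastic dominance sense)
from misreporting her preference. -/
def StrategyProof {n : ℕ} (φ : (Fin n → Pref n) → Matrix (Fin n) (Fin n) ℝ) : Prop :=
  ∀ (prof : Fin n → Pref n) (i : Fin n) (r' : Pref n),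
    StochDom (prof i) (φ prof i) (φ (Function.update prof i r') i)

/-- Envy-freeness: each agent's allocation stochastically dominates every other
agent's allocation with respect to her own preference. -/
def EnvyFree {n : ℕ} (φ : (Fin n → Pref n) → Matrix (Fin n) (Fin n) ℝ) : Prop :=
  ∀ (prof : Fin n → Pref n) (i j : Fin n), StochDom (prof i) (φ prof i) (φ prof j)

/-- A deterministic assignment `μ` (a bijection from agents to objects) is
Pareto-optimal at profile `prof`. -/
def ParetoOptimal {n : ℕ} (prof : Fin n → Pref n) (μ : Equiv.Perm (Fin n)) : Prop :=
  ¬ ∃ ν : Equiv.Perm (Fin n),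
      (∀ i, prof i (ν i) ≤ prof i (μ i)) ∧ ∃ i, prof i (ν i) < prof i (μ i)

/-- Ex-post efficiency: at every profile the random assignment is a convex
combination of permutation matrices of Pareto-optimal deterministic assignments. -/
def ExPostEfficient {n : ℕ} (φ : (Fin n → Pref n) → Matrix (Fin n) (Fin n) ℝ) : Prop :=
  ∀ prof : Fin n → Pref n, ∃ w : Equiv.Perm (Fin n) → ℝ,
    (∀ μ, 0 ≤ w μ) ∧ (∑ μ, w μ = 1) ∧
    (∀ μ, w μ ≠ 0 → ParetoOptimal prof μ) ∧
    ∀ i a, φ prof i a = ∑ μ : Equiv.Perm (Fin n), w μ * (if μ i = a then 1 else 0)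

lemma Equiv.Perm.not_apply_of_mapsTo {α : Type*} [Finite α] (μ : Equiv.Perm α) {p : α → Prop}
    (h : ∀ x, p x → p (μ x)) {x : α} (hx : ¬ p x) : ¬ p (μ x) :=
  fun hμx => hx (by simpa using Equiv.Perm.perm_symm_on_of_perm_on_finite h hμx)

lemma Fin.exists_castAdd_or_exists_natAdd {k m : ℕ} (x : Fin (k + m)) :
    (∃ a, x = Fin.castAdd m a) ∨ ∃ b, x = Fin.natAdd k b := by
  induction x using Fin.addCases <;> simp

lemma Fin.castAdd_lt_natAdd {k m : ℕ} (a : Fin k) (b : Fin m) :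
    Fin.castAdd m a < Fin.natAdd k b := by
  simp [Fin.lt_def]
  omega

lemma Fin.castAdd_ne_natAdd {k m : ℕ} (a : Fin k) (b : Fin m) :
    Fin.castAdd m a ≠ Fin.natAdd k b :=
  (Fin.castAdd_lt_natAdd a b).ne

section Extension

variable {k m : ℕ}

def extendPref (m : ℕ) (r : Pref k) : Pref (k + m) :=
  finSumFinEquiv.permCongr (r.sumCongr (Equiv.refl (Fin m)))

def tailFirstPref (k m : ℕ) : Pref (k + m) :=
  finAddFlip.trans (finCongr (Nat.add_comm m k))

def extendProfile (m : ℕ) (π : Fin k → Pref k) : Fin (k + m) → Pref (k + m) :=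
  Fin.addCases (fun i => extendPref m (π i)) (fun _ => tailFirstPref k m)

@[simp] lemma extendPref_castAdd (r : Pref k) (a : Fin k) :
    extendPref m r (Fin.castAdd m a) = Fin.castAdd m (r a) := by
  simp [extendPref, Equiv.permCongr_apply]

@[simp] lemma extendPref_natAdd (r : Pref k) (b : Fin m) :
    extendPref m r (Fin.natAdd k b) = Fin.natAdd k b := by
  simp [extendPref, Equiv.permCongr_apply]

@[simp] lemma tailFirstPref_castAdd (a : Fin k) :
    (tailFirstPref k m (Fin.castAdd m a) : ℕ) = m + a := by
  simp [tailFirstPref, Nat.add_comm]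

@[simp] lemma tailFirstPref_natAdd (b : Fin m) :
    (tailFirstPref k m (Fin.natAdd k b) : ℕ) = b := by
  simp [tailFirstPref]

lemma tailFirstPref_natAdd_lt_castAdd (a : Fin k) (b : Fin m) :
    tailFirstPref k m (Fin.natAdd k b) < tailFirstPref k m (Fin.castAdd m a) := by
  simp [Fin.lt_def]
  omega

@[simp] lemma extendProfile_castAdd (π : Fin k → Pref k) (i : Fin k) :
    extendProfile m π (Fin.castAdd m i) = extendPref m (π i) := by
  simp [extendProfile]

@[simp] lemma extendProfile_natAdd (π : Fin k → Pref k) (j : Fin m) :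
    extendProfile m π (Fin.natAdd k j) = tailFirstPref k m := by
  simp [extendProfile]

lemma update_extendProfile (π : Fin k → Pref k) (i : Fin k) (r : Pref k) :
    Function.update (extendProfile m π) (Fin.castAdd m i) (extendPref m r) =
      extendProfile m (Function.update π i r) := by
  funext x
  induction x using Fin.addCases with
  | left j =>
    rcases eq_or_ne j i with rfl | hji
    · simp
    · simp [hji]
  | right j => simp [Function.update_of_ne (Fin.castAdd_ne_natAdd i j).symm]

lemma upperSum_extendPref_castAdd (r : Pref k) (p : Fin (k + m) → ℝ) (a : Fin k) :
    upperSum (extendPref m r) p (Fin.castAdd m a) = upperSum r (p ∘ Fin.castAdd m) a := by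
  simp only [upperSum, sum_filter, Fin.sum_univ_add, extendPref_castAdd, extendPref_natAdd,
    (Fin.strictMono_castAdd m).le_iff_le, Function.comp_apply,
    (Fin.castAdd_lt_natAdd _ _).not_ge, if_false, sum_const_zero, add_zero]

lemma StochDom.comp_castAdd {r : Pref k} {p q : Fin (k + m) → ℝ}
    (h : StochDom (extendPref m r) p q) : StochDom r (p ∘ Fin.castAdd m) (q ∘ Fin.castAdd m) :=
  fun a => by simpa only [upperSum_extendPref_castAdd] using h (Fin.castAdd m a)

end Extension

section ParetoOptimal

variable {k m : ℕ} {π : Fin k → Pref k} {μ : Equiv.Perm (Fin (k + m))}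

lemma not_paretoOptimal_extendProfile {i : Fin k} {j : Fin m} {a : Fin k} {b : Fin m}
    (hi : μ (Fin.castAdd m i) = Fin.natAdd k b) (hj : μ (Fin.natAdd k j) = Fin.castAdd m a) :
    ¬ ParetoOptimal (extendProfile m π) μ := by
  refine not_not.mpr ⟨(Equiv.swap (Fin.castAdd m i) (Fin.natAdd k j)).trans μ, fun x => ?_,
    Fin.natAdd k j, ?_⟩
  · rcases eq_or_ne x (Fin.castAdd m i) with rfl | hxi
    · simp [hi, hj, (Fin.castAdd_lt_natAdd ..).le]
    rcases eq_or_ne x (Fin.natAdd k j) with rfl | hxj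
    · simp [hi, hj, (tailFirstPref_natAdd_lt_castAdd ..).le]
    · simp [Equiv.swap_apply_of_ne_of_ne hxi hxj]
  · simp [hi, hj, tailFirstPref_natAdd_lt_castAdd]

lemma ParetoOptimal.exists_apply_castAdd (hμ : ParetoOptimal (extendProfile m π) μ) (i : Fin k) :
    ∃ a, μ (Fin.castAdd m i) = Fin.castAdd m a := by
  by_contra! h
  obtain ⟨b, hb⟩ := (μ (Fin.castAdd m i)).exists_castAdd_or_exists_natAdd.resolve_left
    fun ⟨a, ha⟩ => h a ha
  obtain ⟨_, ⟨j, rfl⟩, hj⟩ :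
      ∃ x, (∃ b, x = Fin.natAdd k b) ∧ ∀ b, μ x ≠ Fin.natAdd k b := by
    by_contra! hbig
    exact μ.not_apply_of_mapsTo hbig (fun ⟨b, hb⟩ => Fin.castAdd_ne_natAdd i b hb) ⟨b, hb⟩
  obtain ⟨a, ha⟩ := (μ (Fin.natAdd k j)).exists_castAdd_or_exists_natAdd.resolve_right
    fun ⟨b, hb⟩ => hj b hb
  exact not_paretoOptimal_extendProfile hb ha hμ

lemma ParetoOptimal.exists_apply_natAdd (hμ : ParetoOptimal (extendProfile m π) μ) (j : Fin m) :
    ∃ b, μ (Fin.natAdd k j) = Fin.natAdd k b := by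
  refine (μ (Fin.natAdd k j)).exists_castAdd_or_exists_natAdd.resolve_left ?_
  refine μ.not_apply_of_mapsTo (p := fun x => ∃ a, x = Fin.castAdd m a) ?_ ?_
  · rintro _ ⟨i, rfl⟩
    exact hμ.exists_apply_castAdd i
  · rintro ⟨a, ha⟩
    exact Fin.castAdd_ne_natAdd a j ha.symm

noncomputable def restrictPerm (m : ℕ) (μ : Equiv.Perm (Fin (k + m))) : Equiv.Perm (Fin k) :=
  if h : ∃ σ : Equiv.Perm (Fin k), ∀ i, μ (Fin.castAdd m i) = Fin.castAdd m (σ i) then h.choose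
  else 1

lemma ParetoOptimal.apply_castAdd (hμ : ParetoOptimal (extendProfile m π) μ) (i : Fin k) :
    μ (Fin.castAdd m i) = Fin.castAdd m (restrictPerm m μ i) := by
  choose f hf using hμ.exists_apply_castAdd
  have hf_inj : Function.Injective f := fun i j hij =>
    Fin.castAdd_injective k m (μ.injective (by rw [hf, hf, hij]))
  have h : ∃ σ : Equiv.Perm (Fin k), ∀ i, μ (Fin.castAdd m i) = Fin.castAdd m (σ i) :=
    ⟨.ofBijective f hf_inj.bijective_of_finite, hf⟩
  rw [restrictPerm, dif_pos h]
  exact h.choose_spec i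

lemma paretoOptimal_restrictPerm (hμ : ParetoOptimal (extendProfile m π) μ) :
    ParetoOptimal π (restrictPerm m μ) := by
  set σ := restrictPerm m μ
  rintro ⟨τ, hle, i, hlt⟩
  refine hμ ⟨μ.trans (extendPref m (τ * σ⁻¹)), fun x => ?_, Fin.castAdd m i, ?_⟩
  · rcases x.exists_castAdd_or_exists_natAdd with ⟨j, rfl⟩ | ⟨j, rfl⟩
    · simpa [hμ.apply_castAdd, σ, (Fin.strictMono_castAdd m).le_iff_le] using hle j
    · obtain ⟨b, hb⟩ := hμ.exists_apply_natAdd j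
      simp [hb]
  · simpa [hμ.apply_castAdd, σ, (Fin.strictMono_castAdd m).lt_iff_lt] using hlt

end ParetoOptimal

lemma ExPostEfficient.apply_eq_zero {n : ℕ} {φ : (Fin n → Pref n) → Matrix (Fin n) (Fin n) ℝ}
    (h : ExPostEfficient φ) {prof : Fin n → Pref n} {i a : Fin n}
    (hne : ∀ μ, ParetoOptimal prof μ → μ i ≠ a) : φ prof i a = 0 := by
  obtain ⟨w, -, -, hw_po, hφ⟩ := h prof
  rw [hφ]
  refine sum_eq_zero fun μ _ => ?_
  rcases eq_or_ne (w μ) 0 with h0 | h0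
  · simp [h0]
  · simp [hne μ (hw_po μ h0)]

section Restriction

variable {k m : ℕ} {φ : (Fin (k + m) → Pref (k + m)) → Matrix (Fin (k + m)) (Fin (k + m)) ℝ}

def restrictMechanism (m : ℕ)
    (φ : (Fin (k + m) → Pref (k + m)) → Matrix (Fin (k + m)) (Fin (k + m)) ℝ)
    (π : Fin k → Pref k) : Matrix (Fin k) (Fin k) ℝ :=
  (φ (extendProfile m π)).submatrix (Fin.castAdd m) (Fin.castAdd m)

@[simp] lemma restrictMechanism_apply (π : Fin k → Pref k) (i a : Fin k) :
    restrictMechanism m φ π i a = φ (extendProfile m π) (Fin.castAdd m i) (Fin.castAdd m a) :=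
  rfl

lemma ExPostEfficient.restrictMechanism (h : ExPostEfficient φ) :
    ExPostEfficient (restrictMechanism m φ) := by
  intro π
  obtain ⟨w, hw_nonneg, hw_sum, hw_po, hφ⟩ := h (extendProfile m π)
  refine ⟨fun σ => ∑ μ with restrictPerm m μ = σ, w μ,
    fun σ => sum_nonneg fun μ _ => hw_nonneg μ, by rw [sum_fiberwise, hw_sum], ?_, ?_⟩
  · intro σ hσ
    obtain ⟨μ, hμ, hwμ⟩ := exists_ne_zero_of_sum_ne_zero hσ
    rw [← (mem_filter.mp hμ).2]
    exact paretoOptimal_restrictPerm (hw_po μ hwμ)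
  · intro i a
    simp_rw [sum_mul]
    rw [restrictMechanism_apply, hφ, ← sum_fiberwise univ (restrictPerm m)]
    refine sum_congr rfl fun σ _ => sum_congr rfl fun μ hμ => ?_
    rcases eq_or_ne (w μ) 0 with h0 | h0
    · simp [h0]
    · simp [(hw_po μ h0).apply_castAdd, (mem_filter.mp hμ).2]

lemma IsMechanism.restrictMechanism (hφ : IsMechanism φ) (hx : ExPostEfficient φ) :
    IsMechanism (restrictMechanism m φ) := by
  intro π
  obtain ⟨h_nonneg, h_row, h_col⟩ := hφ (extendProfile m π)
  refine ⟨fun i a => h_nonneg _ _, fun i => ?_, fun a => ?_⟩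
  · have h_tail : ∀ b, φ (extendProfile m π) (Fin.castAdd m i) (Fin.natAdd k b) = 0 :=
      fun b => hx.apply_eq_zero fun μ hμ => by
        rw [hμ.apply_castAdd]
        exact Fin.castAdd_ne_natAdd _ _
    simpa [Fin.sum_univ_add, h_tail] using h_row (Fin.castAdd m i)
  · have h_tail : ∀ j, φ (extendProfile m π) (Fin.natAdd k j) (Fin.castAdd m a) = 0 :=
      fun j => hx.apply_eq_zero fun μ hμ => by
        obtain ⟨b, hb⟩ := hμ.exists_apply_natAdd j
        rw [hb]
        exact (Fin.castAdd_ne_natAdd _ _).symm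
    simpa [Fin.sum_univ_add, h_tail] using h_col (Fin.castAdd m a)

lemma StrategyProof.restrictMechanism (h : StrategyProof φ) :
    StrategyProof (restrictMechanism m φ) := by
  intro π i r
  have h_ext := h (extendProfile m π) (Fin.castAdd m i) (extendPref m r)
  rw [update_extendProfile, extendProfile_castAdd] at h_ext
  exact h_ext.comp_castAdd

lemma EnvyFree.restrictMechanism (h : EnvyFree φ) : EnvyFree (restrictMechanism m φ) := by
  intro π i j
  have h_ext := h (extendProfile m π) (Fin.castAdd m i) (Fin.castAdd m j)
  rw [extendProfile_castAdd] at h_ext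
  exact h_ext.comp_castAdd

end Restriction

instance {n : ℕ} (prof : Fin n → Pref n) (μ : Equiv.Perm (Fin n)) :
    Decidable (ParetoOptimal prof μ) := by
  unfold ParetoOptimal
  infer_instance

lemma upperSum_fin_three (r : Pref 3) (p : Fin 3 → ℝ) (a : Fin 3) :
    upperSum r p a = (if r 0 ≤ r a then p 0 else 0) + (if r 1 ≤ r a then p 1 else 0) +
      (if r 2 ≤ r a then p 2 else 0) := by
  simp [upperSum, sum_filter, Fin.sum_univ_three]

namespace ThreeAgents

def abc : Pref 3 := Equiv.refl _
def acb : Pref 3 := Equiv.swap 1 2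
def bac : Pref 3 := Equiv.swap 0 1

variable {φ : (Fin 3 → Pref 3) → Matrix (Fin 3) (Fin 3) ℝ}

lemma share_a_eq_of_strategyProof (hsp : StrategyProof φ) :
    φ ![abc, acb, bac] 1 0 = φ ![abc, abc, bac] 1 0 := by
  have h₁ := hsp ![abc, abc, bac] 1 acb 0
  have h₂ := hsp ![abc, acb, bac] 1 abc 0
  rw [show Function.update ![abc, abc, bac] 1 acb = ![abc, acb, bac] by decide] at h₁
  rw [show Function.update ![abc, acb, bac] 1 abc = ![abc, abc, bac] by decide] at h₂
  simp +decide [upperSum_fin_three] at h₁ h₂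
  linarith

lemma share_ab_le_of_strategyProof (hsp : StrategyProof φ) :
    φ ![abc, acb, abc] 2 0 + φ ![abc, acb, abc] 2 1 ≤
      φ ![abc, acb, bac] 2 0 + φ ![abc, acb, bac] 2 1 := by
  have h := hsp ![abc, acb, bac] 2 abc 0
  rw [show Function.update ![abc, acb, bac] 2 abc = ![abc, acb, abc] by decide] at h
  simpa +decide [upperSum_fin_three] using h

lemma share_a_eq_half (hm : IsMechanism φ) (hef : EnvyFree φ) (hx : ExPostEfficient φ) :
    φ ![abc, abc, bac] 1 0 = 1 / 2 := by
  have h_po : φ ![abc, abc, bac] 2 0 = 0 := hx.apply_eq_zero (by decide)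
  have h₁ := hef ![abc, abc, bac] 0 1 0
  have h₂ := hef ![abc, abc, bac] 1 0 0
  have h_col := (hm ![abc, abc, bac]).2.2 0
  simp +decide [upperSum_fin_three, Fin.sum_univ_three] at h₁ h₂ h_col
  linarith

lemma share_ab_le_three_quarters (hm : IsMechanism φ) (hef : EnvyFree φ)
    (hx : ExPostEfficient φ) (h_half : φ ![abc, acb, bac] 1 0 = 1 / 2) :
    φ ![abc, acb, bac] 2 0 + φ ![abc, acb, bac] 2 1 ≤ 3 / 4 := by
  have h_po : φ ![abc, acb, bac] 2 0 = 0 := hx.apply_eq_zero (by decide)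
  have h₁ := hef ![abc, acb, bac] 0 2 1
  have h₂ := hef ![abc, acb, bac] 2 0 0
  have h_col₀ := (hm ![abc, acb, bac]).2.2 0
  have h_col₁ := (hm ![abc, acb, bac]).2.2 1
  have h_nonneg := (hm ![abc, acb, bac]).1 1 1
  simp +decide [upperSum_fin_three, Fin.sum_univ_three] at h₁ h₂ h_col₀ h_col₁
  linarith

lemma five_sixths_le_share_ab (hm : IsMechanism φ) (hef : EnvyFree φ)
    (hx : ExPostEfficient φ) :
    5 / 6 ≤ φ ![abc, acb, abc] 2 0 + φ ![abc, acb, abc] 2 1 := by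
  have h_po : φ ![abc, acb, abc] 1 1 = 0 := hx.apply_eq_zero (by decide)
  have h₁ := hef ![abc, acb, abc] 0 2 0
  have h₂ := hef ![abc, acb, abc] 2 0 0
  have h₃ := hef ![abc, acb, abc] 0 2 1
  have h₄ := hef ![abc, acb, abc] 2 0 1
  have h₅ := hef ![abc, acb, abc] 0 1 0
  have h_col₀ := (hm ![abc, acb, abc]).2.2 0
  have h_col₁ := (hm ![abc, acb, abc]).2.2 1
  simp +decide [upperSum_fin_three, Fin.sum_univ_three] at h₁ h₂ h₃ h₄ h₅ h_col₀ h_col₁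
  linarith

theorem not_exists_mechanism :
    ¬ ∃ φ : (Fin 3 → Pref 3) → Matrix (Fin 3) (Fin 3) ℝ,
        IsMechanism φ ∧ StrategyProof φ ∧ EnvyFree φ ∧ ExPostEfficient φ := by
  rintro ⟨φ, hm, hsp, hef, hx⟩
  have h_half := (share_a_eq_of_strategyProof hsp).trans (share_a_eq_half hm hef hx)
  linarith [share_ab_le_of_strategyProof hsp, share_ab_le_three_quarters hm hef hx h_half,
    five_sixths_le_share_ab hm hef hx]

end ThreeAgents

/-- For any `n ≥ 3`, no mechanism is simultaneously strategy-proof, envy-free and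
ex-post efficient. -/
theorem no_sp_ef_expost_efficient (n : ℕ) (hn : 3 ≤ n) :
    ¬ ∃ φ : (Fin n → Pref n) → Matrix (Fin n) (Fin n) ℝ,
        IsMechanism φ ∧ StrategyProof φ ∧ EnvyFree φ ∧ ExPostEfficient φ := by
  obtain ⟨m, rfl⟩ := Nat.exists_eq_add_of_le hn
  rintro ⟨φ, hm, hsp, hef, hx⟩
  exact ThreeAgents.not_exists_mechanism ⟨restrictMechanism m φ, hm.restrictMechanism hx,
    hsp.restrictMechanism, hef.restrictMechanism, hx.restrictMechanism⟩
end

section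
/- Let f be the transfer function of a pairwise exchange mechanism, i.e. assume that for every preference profile the matrix with entries 1/n + Σ_{j ≠ i} f(≻_i, ≻_j, a) is a doubly stochastic random assignment. Then f satisfies: (1) No transfers: f(≻, ≻, a) = 0 for all ≻ ∈ R and all objects a; (2) Balanced transfers: Σ_{a ∈ O} f(≻, ≻', a) = 0 for all ≻, ≻' ∈ R; (3) Anti-symmetry: f(≻, ≻', a) = −f(≻', ≻, a) for all ≻, ≻' ∈ R and all objects a; (4) Bounded range: f(≻, ≻', a) ∈ [−1/(n(n−1)), 1/(n(n−1))] for all ≻, ≻' ∈ R and all objects a. -/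
open Finset

/-- The pairwise exchange mechanism induced by a transfer function `f`. -/
noncomputable def phiF {n : ℕ} (f : Pref n → Pref n → Fin n → ℝ) (prof : Fin n → Pref n) :
    Matrix (Fin n) (Fin n) ℝ :=
  fun i a => 1 / (n : ℝ) + ∑ j ∈ Finset.univ.erase i, f (prof i) (prof j) a

/-- The transfer function takes values in `[-1/n, 1/n]`. -/
def TransferBounded {n : ℕ} (f : Pref n → Pref n → Fin n → ℝ) : Prop :=
  ∀ r r' a, -(1 / (n : ℝ)) ≤ f r r' a ∧ f r r' a ≤ 1 / (n : ℝ)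

/-! At a profile in which every agent other than `i` reports the same preference `r'`, agent `i`
receives `1/n + (n - 1) f(≻_i, r', a)` of each object `a`. Feasibility at the unanimous profile
(column sums) forces `f(≻, ≻, a) = 0`; at the profile where one agent reports `r` and all others
`r'`, the row of the deviant agent gives balancedness, its column gives anti-symmetry and the
nonnegativity of its entries gives the bound `f ≥ -1/(n(n-1))`. -/

section TransferFunction

variable {n : ℕ}

theorem sum_univ_erase_const (i : Fin n) (c : ℝ) :
    ∑ _j ∈ univ.erase i, c = ((n : ℝ) - 1) * c := by
  rw [sum_erase_eq_sub (mem_univ i)]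
  simp only [sum_const, card_univ, Fintype.card_fin, nsmul_eq_mul]
  ring

theorem phiF_apply_of_forall_ne (f : Pref n → Pref n → Fin n → ℝ) {prof : Fin n → Pref n}
    {i : Fin n} {r' : Pref n} (h : ∀ j ≠ i, prof j = r') (a : Fin n) :
    phiF f prof i a = 1 / n + ((n : ℝ) - 1) * f (prof i) r' a := by
  rw [phiF, ← sum_univ_erase_const i]
  congr 1
  exact sum_congr rfl fun j hj => by rw [h j (ne_of_mem_erase hj)]

theorem phiF_update_apply_self (f : Pref n → Pref n → Fin n → ℝ) (r r' : Pref n)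
    (i a : Fin n) :
    phiF f (Function.update (fun _ => r') i r) i a = 1 / n + ((n : ℝ) - 1) * f r r' a := by
  rw [phiF_apply_of_forall_ne f (r' := r') fun j hj => by rw [Function.update_of_ne hj],
    Function.update_self]

theorem phiF_update_apply_of_ne (f : Pref n → Pref n → Fin n → ℝ) (r r' : Pref n)
    {i k : Fin n} (hki : k ≠ i) (a : Fin n) (hr' : f r' r' a = 0) :
    phiF f (Function.update (fun _ => r') i r) k a = 1 / n + f r' r a := by
  rw [phiF, sum_eq_single_of_mem i (mem_erase.mpr ⟨hki.symm, mem_univ i⟩)]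
  · simp [Function.update_of_ne hki]
  · intro j _ hji
    simp [Function.update_of_ne hki, Function.update_of_ne hji, hr']

theorem transfer_self_eq_zero (hn : 2 ≤ n) {f : Pref n → Pref n → Fin n → ℝ}
    (hmech : IsMechanism (phiF f)) (r : Pref n) (a : Fin n) : f r r a = 0 := by
  have hcol := (hmech fun _ => r).2.2 a
  simp only [phiF_apply_of_forall_ne f (prof := fun _ => r) (fun _ _ => rfl), sum_const,
    card_univ, Fintype.card_fin, nsmul_eq_mul] at hcol
  have hn' : (2 : ℝ) ≤ n := by exact_mod_cast hn
  have : (n : ℝ) * ((n : ℝ) - 1) * f r r a = 0 := by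
    field_simp at hcol
    linarith
  simpa [show (n : ℝ) * ((n : ℝ) - 1) ≠ 0 by nlinarith] using this

theorem transfer_sum_eq_zero (hn : 2 ≤ n) {f : Pref n → Pref n → Fin n → ℝ}
    (hmech : IsMechanism (phiF f)) (r r' : Pref n) : ∑ a, f r r' a = 0 := by
  let i : Fin n := ⟨0, by omega⟩
  have hrow := (hmech (Function.update (fun _ => r') i r)).2.1 i
  simp only [phiF_update_apply_self, sum_add_distrib, ← mul_sum, sum_const, card_univ,
    Fintype.card_fin, nsmul_eq_mul] at hrow
  have hn' : (2 : ℝ) ≤ n := by exact_mod_cast hn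
  have : ((n : ℝ) - 1) * ∑ a, f r r' a = 0 := by
    field_simp at hrow
    linarith
  simpa [show (n : ℝ) - 1 ≠ 0 by linarith] using this

theorem transfer_antisymm (hn : 2 ≤ n) {f : Pref n → Pref n → Fin n → ℝ}
    (hmech : IsMechanism (phiF f)) (r r' : Pref n) (a : Fin n) : f r r' a = -f r' r a := by
  let i : Fin n := ⟨0, by omega⟩
  have hcol := (hmech (Function.update (fun _ => r') i r)).2.2 a
  rw [← add_sum_erase _ _ (mem_univ i),
    sum_congr rfl fun k hk => phiF_update_apply_of_ne f r r' (ne_of_mem_erase hk) a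
      (transfer_self_eq_zero hn hmech r' a),
    phiF_update_apply_self, sum_univ_erase_const] at hcol
  have hn' : (2 : ℝ) ≤ n := by exact_mod_cast hn
  have : (n : ℝ) * ((n : ℝ) - 1) * (f r r' a + f r' r a) = 0 := by
    field_simp at hcol
    linear_combination hcol
  have := (mul_eq_zero.mp this).resolve_left (by nlinarith)
  linarith

theorem neg_le_transfer (hn : 2 ≤ n) {f : Pref n → Pref n → Fin n → ℝ}
    (hmech : IsMechanism (phiF f)) (r r' : Pref n) (a : Fin n) :
    -(1 / ((n : ℝ) * ((n : ℝ) - 1))) ≤ f r r' a := by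
  let i : Fin n := ⟨0, by omega⟩
  have hnonneg := (hmech (Function.update (fun _ => r') i r)).1 i a
  rw [phiF_update_apply_self] at hnonneg
  have hn' : (2 : ℝ) ≤ n := by exact_mod_cast hn
  have : 0 ≤ 1 + (n : ℝ) * ((n : ℝ) - 1) * f r r' a := by
    have := mul_nonneg (Nat.cast_nonneg n) hnonneg
    rwa [mul_add, mul_one_div_cancel (by positivity), ← mul_assoc] at this
  rw [neg_le, le_div_iff₀ (by nlinarith)]
  linarith

theorem transfer_le (hn : 2 ≤ n) {f : Pref n → Pref n → Fin n → ℝ}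
    (hmech : IsMechanism (phiF f)) (r r' : Pref n) (a : Fin n) :
    f r r' a ≤ 1 / ((n : ℝ) * ((n : ℝ) - 1)) := by
  rw [transfer_antisymm hn hmech, neg_le]
  exact neg_le_transfer hn hmech r' r a

end TransferFunction

theorem transfer_function_properties_general (n : ℕ) (hn : 3 ≤ n)
    (f : Pref n → Pref n → Fin n → ℝ)
    (hmech : IsMechanism (phiF f)) :
    (∀ (r : Pref n) (a : Fin n), f r r a = 0) ∧
    (∀ r r' : Pref n, ∑ a, f r r' a = 0) ∧
    (∀ (r r' : Pref n) (a : Fin n), f r r' a = - f r' r a) ∧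
    (∀ (r r' : Pref n) (a : Fin n),
      -(1 / ((n : ℝ) * ((n : ℝ) - 1))) ≤ f r r' a ∧
        f r r' a ≤ 1 / ((n : ℝ) * ((n : ℝ) - 1))) := by
  have hn2 : 2 ≤ n := by omega
  exact ⟨transfer_self_eq_zero hn2 hmech, transfer_sum_eq_zero hn2 hmech,
    transfer_antisymm hn2 hmech,
    fun r r' a => ⟨neg_le_transfer hn2 hmech r r' a, transfer_le hn2 hmech r r' a⟩⟩

/-- Necessary properties of the transfer function of a (feasible) pairwise exchange
mechanism: no transfers, balanced transfers, anti-symmetry and bounded range. -/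
theorem transfer_function_properties (n : ℕ) (hn : 3 ≤ n)
    (f : Pref n → Pref n → Fin n → ℝ) (hf : TransferBounded f)
    (hmech : IsMechanism (phiF f)) :
    (∀ (r : Pref n) (a : Fin n), f r r a = 0) ∧
    (∀ r r' : Pref n, ∑ a, f r r' a = 0) ∧
    (∀ (r r' : Pref n) (a : Fin n), f r r' a = - f r' r a) ∧
    (∀ (r r' : Pref n) (a : Fin n),
      -(1 / ((n : ℝ) * ((n : ℝ) - 1))) ≤ f r r' a ∧
        f r r' a ≤ 1 / ((n : ℝ) * ((n : ℝ) - 1))) :=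
  transfer_function_properties_general n hn f hmech
end

section
/- A random assignment mechanism φ is a pairwise exchange mechanism (i.e. there exists a transfer function f : R × R × O → [−1/n, 1/n] with φ(≻)_{i,a} = 1/n + Σ_{j ≠ i} f(≻_i, ≻_j, a) for all profiles ≻, agents i, and objects a) if and only if φ is anonymous and separable. -/
open Finset

/-- Anonymity of a mechanism: invariance under renaming of the agents. -/
def Anonymous {n : ℕ} (φ : (Fin n → Pref n) → Matrix (Fin n) (Fin n) ℝ) : Prop :=
  ∀ (prof : Fin n → Pref n) (π : Equiv.Perm (Fin n)) (i : Fin n) (a : Fin n),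
    φ (fun j => prof (π j)) i a = φ prof (π i) a

/-- Separability of a mechanism. -/
def Separable {n : ℕ} (φ : (Fin n → Pref n) → Matrix (Fin n) (Fin n) ℝ) : Prop :=
  ∀ (prof prof' : Fin n → Pref n) (i : Fin n) (a : Fin n),
    φ (Function.update prof' i (prof i)) i a - φ prof i a =
      ∑ j ∈ Finset.univ.erase i,
        (φ (Function.update prof j (prof' j)) i a - φ prof i a)

/-- A mechanism is a pairwise exchange mechanism iff it is anonymous and separable. -/
theorem pairwise_exchange_iff_anonymous_separable (n : ℕ) (hn : 3 ≤ n)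
    (φ : (Fin n → Pref n) → Matrix (Fin n) (Fin n) ℝ) (hmech : IsMechanism φ) :
    (∃ f : Pref n → Pref n → Fin n → ℝ, TransferBounded f ∧
        ∀ (prof : Fin n → Pref n) (i a : Fin n), φ prof i a = phiF f prof i a) ↔
      (Anonymous φ ∧ Separable φ) := by
  haveI : NeZero n := ⟨by omega⟩
  have hnR : (0:ℝ) < (n:ℝ) := by exact_mod_cast (by omega : 0 < n)
  constructor
  · rintro ⟨f, hfb, hf⟩
    constructor
    · intro prof π i a
      rw [hf, hf]
      show (1/(n:ℝ) + ∑ j ∈ Finset.univ.erase i, f (prof (π i)) (prof (π j)) a)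
          = 1/(n:ℝ) + ∑ j ∈ Finset.univ.erase (π i), f (prof (π i)) (prof j) a
      congr 1
      refine Finset.sum_equiv π ?_ ?_
      · intro j
        simp [π.injective.ne_iff]
      · intro j _
        rfl
    · intro prof prof' i a
      simp only [hf]
      have e1 : phiF f (Function.update prof' i (prof i)) i a
          = 1/(n:ℝ) + ∑ j ∈ Finset.univ.erase i, f (prof i) (prof' j) a := by
        unfold phiF
        rw [Function.update_self]
        congr 1
        refine Finset.sum_congr rfl fun j hj => ?_
        rw [Function.update_of_ne (Finset.ne_of_mem_erase hj)]
      have e2 : ∀ j ∈ Finset.univ.erase i,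
          phiF f (Function.update prof j (prof' j)) i a
            = phiF f prof i a + (f (prof i) (prof' j) a - f (prof i) (prof j) a) := by
        intro j hj
        have hji : j ≠ i := Finset.ne_of_mem_erase hj
        unfold phiF
        rw [Function.update_of_ne hji.symm]
        have : ∑ k ∈ Finset.univ.erase i, f (prof i) (Function.update prof j (prof' j) k) a
            = ∑ k ∈ Finset.univ.erase i, (f (prof i) (prof k) a
                + (if k = j then f (prof i) (prof' j) a - f (prof i) (prof j) a else 0)) := by
          refine Finset.sum_congr rfl fun k hk => ?_
          by_cases hkj : k = j
          · subst hkj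
            rw [Function.update_self]
            simp
          · rw [Function.update_of_ne hkj]
            simp [hkj]
        rw [this, Finset.sum_add_distrib, Finset.sum_ite_eq' (Finset.univ.erase i) j]
        simp [hj]
        ring
      have e3 : ∑ j ∈ Finset.univ.erase i,
          (phiF f (Function.update prof j (prof' j)) i a - phiF f prof i a)
          = ∑ j ∈ Finset.univ.erase i,
            (f (prof i) (prof' j) a - f (prof i) (prof j) a) :=
        Finset.sum_congr rfl fun j hj => by rw [e2 j hj]; ring
      have e4 : phiF f prof i a
          = 1/(n:ℝ) + ∑ j ∈ Finset.univ.erase i, f (prof i) (prof j) a := rfl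
      rw [e1, e3, e4, Finset.sum_sub_distrib]
      ring
  · rintro ⟨han, hsep⟩
    have hval1 : ((1:Fin n):ℕ) = 1 := by
      simp [Fin.val_one', Nat.mod_eq_of_lt (by omega : 1 < n)]
    have h01 : (0:Fin n) ≠ 1 := by
      intro h
      have := congrArg Fin.val h
      simp [hval1] at this
      omega
    -- constant profiles give uniform assignment
    have hconst : ∀ (r : Pref n) (i : Fin n) (a : Fin n),
        φ (fun _ => r) i a = 1/(n:ℝ) := by
      intro r i a
      have heq : ∀ i' : Fin n, φ (fun _ => r) i' a = φ (fun _ => r) i a := by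
        intro i'
        have h := han (fun _ => r) (Equiv.swap i i') i' a
        simpa using h
      have hcol := (hmech (fun _ => r)).2.2 a
      rw [Finset.sum_congr rfl (fun i' _ => heq i')] at hcol
      rw [Finset.sum_const, Finset.card_univ, Fintype.card_fin, nsmul_eq_mul] at hcol
      rw [eq_div_iff (ne_of_gt hnR), mul_comm]
      exact hcol
    -- single-deviation profiles: symmetric in the non-deviators
    have hA : ∀ (r r' : Pref n) (a i j : Fin n), i ≠ j →
        φ (Function.update (fun _ => r) j r') i a
          = φ (Function.update (fun _ => r) 0 r') 1 a := by
      intro r r' a i j hij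
      obtain ⟨σ, hσ0, hσ1⟩ : ∃ σ : Equiv.Perm (Fin n), σ 0 = j ∧ σ 1 = i := by
        classical
        set τ := Equiv.swap (0:Fin n) j with hτ
        set k := τ.symm i with hk
        have hk0 : k ≠ 0 := by
          intro h
          apply hij.symm
          have : τ k = i := τ.apply_symm_apply i
          rw [h] at this
          rw [← this]
          simp [hτ]
        refine ⟨(Equiv.swap (1:Fin n) k).trans τ, ?_, ?_⟩
        · have : Equiv.swap (1:Fin n) k 0 = 0 :=
            Equiv.swap_apply_of_ne_of_ne h01 (Ne.symm hk0)
          simp [Equiv.trans_apply, this, hτ]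
        · simp [Equiv.trans_apply, hk]
      have h := han (Function.update (fun _ => r) j r') σ 1 a
      have hprof : (fun x => Function.update (fun _ => r) j r' (σ x))
          = Function.update (fun _ => (r : Pref n)) 0 r' := by
        funext x
        by_cases hx : x = 0
        · subst hx
          rw [hσ0]
          simp
        · have hxj : σ x ≠ j := by
            intro h'
            exact hx (σ.injective (h'.trans hσ0.symm))
          rw [Function.update_of_ne hxj, Function.update_of_ne hx]
      rw [hprof, hσ1] at h
      exact h.symm
    refine ⟨fun r r' a => φ (Function.update (fun _ => r) 0 r') 1 a - 1/(n:ℝ), ?_, ?_⟩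
    · intro r r' a
      constructor
      · have := (hmech (Function.update (fun _ => r) 0 r')).1 1 a
        simp only []
        linarith
      · have hcol := (hmech (Function.update (fun _ => r) 0 r')).2.2 a
        rw [← Finset.add_sum_erase _ _ (Finset.mem_univ (0:Fin n))] at hcol
        have heach : ∀ i ∈ Finset.univ.erase (0:Fin n),
            φ (Function.update (fun _ => r) 0 r') i a
              = φ (Function.update (fun _ => r) 0 r') 1 a := by
          intro i hi
          exact hA r r' a i 0 (Finset.ne_of_mem_erase hi)
        rw [Finset.sum_congr rfl heach, Finset.sum_const, Finset.card_erase_of_mem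
          (Finset.mem_univ _), Finset.card_univ, Fintype.card_fin, nsmul_eq_mul] at hcol
        have hcast : ((n - 1 : ℕ) : ℝ) = (n:ℝ) - 1 := by
          rw [Nat.cast_sub (by omega)]
          simp
        rw [hcast] at hcol
        have h0 := (hmech (Function.update (fun _ => r) 0 r')).1 0 a
        have h1 := (hmech (Function.update (fun _ => r) 0 r')).1 1 a
        have hn3 : (3:ℝ) ≤ (n:ℝ) := by exact_mod_cast hn
        set v := φ (Function.update (fun _ => r) 0 r') 1 a with hv
        have hle : ((n:ℝ) - 1) * v ≤ 1 := by linarith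
        have hinv : (n:ℝ) * (1/(n:ℝ)) = 1 := mul_one_div_cancel (ne_of_gt hnR)
        show v - 1/(n:ℝ) ≤ 1/(n:ℝ)
        nlinarith [hle, h1, hn3, hinv, hnR,
          mul_nonneg (by linarith : (0:ℝ) ≤ (n:ℝ) - 3) h1]
    · intro prof i a
      have h := hsep (fun _ => prof i) prof i a
      rw [Function.update_eq_self] at h
      rw [hconst (prof i) i a] at h
      have hsum : ∀ j ∈ Finset.univ.erase i,
          φ (Function.update (fun _ => prof i) j (prof j)) i a - 1/(n:ℝ)
            = φ (Function.update (fun _ => prof i) 0 (prof j)) 1 a - 1/(n:ℝ) := by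
        intro j hj
        rw [hA (prof i) (prof j) a i j (Finset.ne_of_mem_erase hj).symm]
      rw [Finset.sum_congr rfl hsum] at h
      show φ prof i a = 1/(n:ℝ) + ∑ j ∈ Finset.univ.erase i,
        (φ (Function.update (fun _ => prof i) 0 (prof j)) 1 a - 1/(n:ℝ))
      linarith
end

section
/- Let φ^f be a pairwise exchange mechanism with transfer function f, and suppose ≻ is the preference with ranking a_1 ≻ a_2 ≻ … ≻ a_n. If φ^f is strategy-proof, then for all preferences ≻', ≻'' ∈ R and every t ∈ {1,…,n}: Σ_{k=1}^t f(≻, ≻'', a_k) ≥ Σ_{k=1}^t f(≻', ≻'', a_k). -/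
open Finset

/-- The sum of `p` over the top `t` objects of preference `r`. -/
def topSum {n : ℕ} (r : Pref n) (p : Fin n → ℝ) (t : ℕ) : ℝ :=
  ∑ a ∈ Finset.univ.filter (fun a => (r a : ℕ) < t), p a

/-- In a strategy-proof pairwise exchange mechanism, the transfers received by an
agent reporting `r` from any other agent stochastically dominate (w.r.t. `r`) the
transfers received when reporting any other `r'`. -/
theorem sp_transfer_monotone (n : ℕ) (hn : 3 ≤ n)
    (f : Pref n → Pref n → Fin n → ℝ) (hf : TransferBounded f)
    (hmech : IsMechanism (phiF f)) (hsp : StrategyProof (phiF f)) :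
    ∀ (r r' r'' : Pref n) (t : ℕ), 1 ≤ t → t ≤ n →
      topSum r (f r' r'') t ≤ topSum r (f r r'') t := by
  intro r r' r'' t ht1 htn
  have hn0 : 0 < n := by omega
  set i : Fin n := ⟨0, hn0⟩ with hi
  set prof : Fin n → Pref n := Function.update (fun _ => r'') i r with hprof
  have hpi : prof i = r := by simp [hprof]
  have hpj : ∀ j, j ≠ i → prof j = r'' := by
    intro j hj; simp [hprof, Function.update_of_ne hj]
  have key : ∀ p : Fin n → ℝ, upperSum r p (r.symm ⟨t-1, by omega⟩) = topSum r p t := by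
    intro p
    unfold upperSum topSum
    apply Finset.sum_congr _ (fun _ _ => rfl)
    ext o
    simp only [Finset.mem_filter, Finset.mem_univ, true_and, Fin.le_def,
      Equiv.apply_symm_apply]
    omega
  have comp : ∀ q : Pref n, topSum r (phiF f (Function.update prof i q) i) t
      = ((Finset.univ.filter (fun a => ((r a : ℕ) < t))).card : ℝ) * (1/(n:ℝ))
        + ((n:ℝ)-1) * topSum r (f q r'') t := by
    intro q
    unfold topSum phiF
    rw [Finset.sum_add_distrib, Finset.mul_sum]
    congr 1
    · rw [Finset.sum_const, nsmul_eq_mul]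
    · apply Finset.sum_congr rfl
      intro a _
      have h1 : ∀ j ∈ Finset.univ.erase i,
          f (Function.update prof i q i) (Function.update prof i q j) a = f q r'' a := by
        intro j hj
        have hj' : j ≠ i := Finset.ne_of_mem_erase hj
        rw [Function.update_self, Function.update_of_ne hj', hpj j hj']
      rw [Finset.sum_congr rfl h1, Finset.sum_const,
        Finset.card_erase_of_mem (Finset.mem_univ i), Finset.card_univ, Fintype.card_fin,
        nsmul_eq_mul, Nat.cast_sub (by omega), Nat.cast_one]
  have hupd : Function.update prof i r = prof := by
    conv_lhs => rw [← hpi]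
    exact Function.update_eq_self i prof
  have hsp' := hsp prof i r' (r.symm ⟨t-1, by omega⟩)
  rw [hpi] at hsp'
  rw [key, key] at hsp'
  rw [comp] at hsp'
  rw [← hupd] at hsp'
  rw [comp] at hsp'
  have hpos : (0:ℝ) < (n:ℝ) - 1 := by
    have : (3:ℝ) ≤ (n:ℝ) := by exact_mod_cast hn
    linarith
  nlinarith [hsp']
end

section
/- A pairwise exchange mechanism φ^f is strategy-proof if and only if its transfer function f is sender invariant and swap monotone. -/
open Finset

/-- Sender invariance of a transfer function. -/
def SenderInvariant {n : ℕ} (f : Pref n → Pref n → Fin n → ℝ) : Prop :=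
  ∀ (r r' r'' : Pref n) (t : Fin n),
    ((∀ k, k ≤ t → r'.symm k = r''.symm k) →
      f r r' (r'.symm t) = f r r'' (r'.symm t)) ∧
    ((∀ k, t ≤ k → r'.symm k = r''.symm k) →
      f r r' (r'.symm t) = f r r'' (r'.symm t))

/-- Swap monotonicity of a transfer function: if `≻''` is obtained from `≻'` by
swapping two consecutively ranked objects `a, b` with `a ≻' b` (so `b ≻'' a`), then
`f(≻', ≻, a) ≥ f(≻'', ≻, a)`. -/
def SwapMonotone {n : ℕ} (f : Pref n → Pref n → Fin n → ℝ) : Prop :=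
  ∀ (r r' : Pref n) (a b : Fin n), (r' b : ℕ) = (r' a : ℕ) + 1 →
    f (r'.trans (Equiv.swap (r' a) (r' b))) r a ≤ f r' r a

namespace SPaux
variable {n : ℕ}

/-- Sum of `h` over objects of `r`-rank `< c`. -/
def T (r : Pref n) (h : Fin n → ℝ) (c : ℕ) : ℝ :=
  ∑ o ∈ Finset.univ.filter (fun o => (r o : ℕ) < c), h o

lemma T_zero (r : Pref n) (h : Fin n → ℝ) : T r h 0 = 0 := by
  simp [T]

lemma T_succ (r : Pref n) (h : Fin n → ℝ) {c : ℕ} (hc : c < n) :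
    T r h (c+1) = T r h c + h (r.symm ⟨c, hc⟩) := by
  have hins : Finset.univ.filter (fun o => (r o : ℕ) < c + 1)
      = insert (r.symm ⟨c, hc⟩) (Finset.univ.filter (fun o => (r o : ℕ) < c)) := by
    ext o
    simp only [mem_filter, mem_univ, true_and, mem_insert]
    constructor
    · intro ho
      rcases Nat.lt_succ_iff_lt_or_eq.1 ho with h1 | h1
      · exact Or.inr h1
      · left
        rw [Equiv.eq_symm_apply]
        exact Fin.ext h1
    · rintro (rfl | h1)
      · simp
      · omega
  rw [T, T, hins, Finset.sum_insert (by simp)]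
  ring

lemma T_congr_down (r' r'' : Pref n) (c : ℕ)
    (hk : ∀ k : Fin n, (k : ℕ) < c → r'.symm k = r''.symm k) (h : Fin n → ℝ) :
    T r' h c = T r'' h c := by
  have hset : Finset.univ.filter (fun o => (r' o : ℕ) < c)
      = Finset.univ.filter (fun o => (r'' o : ℕ) < c) := by
    ext o
    simp only [mem_filter, mem_univ, true_and]
    constructor
    · intro ho
      have h1 := hk (r' o) ho
      rw [Equiv.symm_apply_apply] at h1
      have h2 : r'' o = r' o := by
        have := congrArg r'' h1; simpa using this
      rw [h2]; exact ho
    · intro ho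
      have h1 := hk (r'' o) ho
      rw [Equiv.symm_apply_apply] at h1
      have h2 : r' o = r'' o := by
        have := congrArg r' h1; simpa using this.symm
      rw [h2]; exact ho
  rw [T, T, hset]

lemma T_congr_up (r' r'' : Pref n) (c : ℕ)
    (hk : ∀ k : Fin n, c ≤ (k : ℕ) → r'.symm k = r''.symm k) (h : Fin n → ℝ) :
    T r' h c = T r'' h c := by
  have hset : Finset.univ.filter (fun o => (r' o : ℕ) < c)
      = Finset.univ.filter (fun o => (r'' o : ℕ) < c) := by
    ext o
    simp only [mem_filter, mem_univ, true_and]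
    constructor
    · intro ho
      by_contra hno
      push_neg at hno
      have h1 := hk (r'' o) hno
      rw [Equiv.symm_apply_apply] at h1
      have h2 : r' o = r'' o := by
        have := congrArg r' h1; simpa using this.symm
      omega
    · intro ho
      by_contra hno
      push_neg at hno
      have h1 := hk (r' o) hno
      rw [Equiv.symm_apply_apply] at h1
      have h2 : r'' o = r' o := by
        have := congrArg r'' h1; simpa using this
      omega
  rw [T, T, hset]

lemma sum_pair_support (U : Finset (Fin n)) (h : Fin n → ℝ) (p q : Fin n) (hpq : p ≠ q)
    (h0 : ∀ o, o ≠ p → o ≠ q → h o = 0) :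
    ∑ o ∈ U, h o = (if p ∈ U then h p else 0) + (if q ∈ U then h q else 0) := by
  have hpt : ∀ o ∈ U, h o = (if o = p then h p else 0) + (if o = q then h q else 0) := by
    intro o _
    by_cases h1 : o = p
    · subst h1; simp [hpq]
    by_cases h2 : o = q
    · subst h2; simp [h1]
    · simp [h1, h2, h0 o h1 h2]
  rw [Finset.sum_congr rfl hpt, Finset.sum_add_distrib,
    Finset.sum_ite_eq' U p (fun _ => h p), Finset.sum_ite_eq' U q (fun _ => h q)]



variable (f : Pref n → Pref n → Fin n → ℝ)

/-- The key condition equivalent to strategy-proofness. -/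
def Cnd : Prop :=
  ∀ (r x s : Pref n) (c : ℕ), c ≤ n →
    T r (fun o => f x s o) c ≤ T r (fun o => f r s o) c

lemma upperSum_eq_T (r : Pref n) (p : Fin n → ℝ) (a : Fin n) :
    upperSum r p a = T r p ((r a : ℕ) + 1) := by
  rw [upperSum, T]
  apply Finset.sum_congr _ (fun _ _ => rfl)
  ext o
  simp only [mem_filter, mem_univ, true_and, Fin.le_def]
  omega

variable {f}

section Mech
variable (hn : 3 ≤ n) (hmech : IsMechanism (phiF f))
include hn hmech

lemma hcol : ∀ (prof : Fin n → Pref n) (a : Fin n),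
    ∑ i, ∑ j ∈ Finset.univ.erase i, f (prof i) (prof j) a = 0 := by
  intro prof a
  have h := (hmech prof).2.2 a
  have hne : (n : ℝ) ≠ 0 := by positivity
  have hsum : ∑ i : Fin n, (1 / (n:ℝ) + ∑ j ∈ Finset.univ.erase i, f (prof i) (prof j) a) = 1 := h
  rw [Finset.sum_add_distrib, Finset.sum_const, Finset.card_univ, Fintype.card_fin,
    nsmul_eq_mul] at hsum
  have : (n : ℝ) * (1 / (n:ℝ)) = 1 := by field_simp
  linarith

lemma hrowpre : ∀ (prof : Fin n → Pref n) (i : Fin n),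
    ∑ a, ∑ j ∈ Finset.univ.erase i, f (prof i) (prof j) a = 0 := by
  intro prof i
  have h := (hmech prof).2.1 i
  have hne : (n : ℝ) ≠ 0 := by positivity
  have hsum : ∑ a : Fin n, (1 / (n:ℝ) + ∑ j ∈ Finset.univ.erase i, f (prof i) (prof j) a) = 1 := h
  rw [Finset.sum_add_distrib, Finset.sum_const, Finset.card_univ, Fintype.card_fin,
    nsmul_eq_mul] at hsum
  have : (n : ℝ) * (1 / (n:ℝ)) = 1 := by field_simp
  linarith

lemma hzero : ∀ (s : Pref n) (a : Fin n), f s s a = 0 := by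
  intro s a
  have h := hcol hn hmech (fun _ => s) a
  have hcard : ∀ i : Fin n, ((Finset.univ.erase i).card : ℝ) = (n : ℝ) - 1 := by
    intro i
    rw [Finset.card_erase_of_mem (mem_univ i), Finset.card_univ, Fintype.card_fin]
    have : (1:ℕ) ≤ n := by omega
    push_cast [this]
    ring
  have h2 : ∑ i : Fin n, ((n:ℝ) - 1) * f s s a = 0 := by
    rw [← h]
    apply Finset.sum_congr rfl
    intro i _
    rw [Finset.sum_const, nsmul_eq_mul, hcard i]
  rw [Finset.sum_const, Finset.card_univ, Fintype.card_fin, nsmul_eq_mul] at h2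
  have h3 : (3:ℝ) ≤ (n:ℝ) := by exact_mod_cast hn
  rcases mul_eq_zero.mp h2 with h4 | h4
  · linarith
  rcases mul_eq_zero.mp h4 with h5 | h5
  · linarith
  · exact h5

lemma hanti : ∀ (x s : Pref n) (a : Fin n), f s x a = - f x s a := by
  intro x s a
  have hi0 : (0:ℕ) < n := by omega
  set i0 : Fin n := ⟨0, hi0⟩ with hi0d
  set prof := Function.update (fun _ : Fin n => s) i0 x with hprof
  have hprofi0 : prof i0 = x := Function.update_self ..
  have hprofj : ∀ j, j ≠ i0 → prof j = s := fun j hj => Function.update_of_ne hj ..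
  have h := hcol hn hmech prof a
  rw [← Finset.add_sum_erase _ _ (mem_univ i0)] at h
  have e1 : ∑ j ∈ Finset.univ.erase i0, f (prof i0) (prof j) a = ((n:ℝ)-1) * f x s a := by
    rw [hprofi0,
      Finset.sum_congr rfl (fun j hj => by rw [hprofj j (Finset.mem_erase.mp hj).1]),
      Finset.sum_const, Finset.card_erase_of_mem (mem_univ _), Finset.card_univ,
      Fintype.card_fin, nsmul_eq_mul]
    have h1 : (1:ℕ) ≤ n := by omega
    push_cast [h1]
    ring
  have e2 : ∀ i ∈ Finset.univ.erase i0, ∑ j ∈ Finset.univ.erase i, f (prof i) (prof j) a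
      = f s x a := by
    intro i hi
    have hii0 : i ≠ i0 := (Finset.mem_erase.mp hi).1
    have hmem : i0 ∈ Finset.univ.erase i := Finset.mem_erase.mpr ⟨Ne.symm hii0, mem_univ _⟩
    rw [hprofj i hii0, ← Finset.add_sum_erase _ _ hmem, hprofi0]
    have hz : ∑ j ∈ (Finset.univ.erase i).erase i0, f s (prof j) a = 0 := by
      apply Finset.sum_eq_zero
      intro j hj
      rw [hprofj j (Finset.mem_erase.mp hj).1]
      exact hzero hn hmech s a
    rw [hz]; ring
  rw [Finset.sum_congr rfl e2, Finset.sum_const, Finset.card_erase_of_mem (mem_univ i0),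
    Finset.card_univ, Fintype.card_fin, nsmul_eq_mul, e1] at h
  have h1 : (1:ℕ) ≤ n := by omega
  push_cast [h1] at h
  have h3 : (3:ℝ) ≤ (n:ℝ) := by exact_mod_cast hn
  have h4 : ((n:ℝ)-1) * (f x s a + f s x a) = 0 := by linarith
  rcases mul_eq_zero.mp h4 with h5 | h5
  · linarith
  · linarith

lemma hrow : ∀ (x s : Pref n), ∑ a, f x s a = 0 := by
  intro x s
  have hi0 : (0:ℕ) < n := by omega
  set i0 : Fin n := ⟨0, hi0⟩ with hi0d
  set prof := Function.update (fun _ : Fin n => s) i0 x with hprof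
  have hprofi0 : prof i0 = x := Function.update_self ..
  have hprofj : ∀ j, j ≠ i0 → prof j = s := fun j hj => Function.update_of_ne hj ..
  have h := hrowpre hn hmech prof i0
  have e1 : ∀ a ∈ Finset.univ, ∑ j ∈ Finset.univ.erase i0, f (prof i0) (prof j) a
      = ((n:ℝ)-1) * f x s a := by
    intro a _
    rw [hprofi0,
      Finset.sum_congr rfl (fun j hj => by rw [hprofj j (Finset.mem_erase.mp hj).1]),
      Finset.sum_const, Finset.card_erase_of_mem (mem_univ _), Finset.card_univ,
      Fintype.card_fin, nsmul_eq_mul]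
    have h1 : (1:ℕ) ≤ n := by omega
    push_cast [h1]
    ring
  rw [Finset.sum_congr rfl e1, ← Finset.mul_sum] at h
  have h3 : (3:ℝ) ≤ (n:ℝ) := by exact_mod_cast hn
  rcases mul_eq_zero.mp h with h5 | h5
  · linarith
  · exact h5

lemma row_eq (y s : Pref n) (i0 : Fin n) (o : Fin n) :
    phiF f (Function.update (fun _ : Fin n => s) i0 y) i0 o
      = 1/(n:ℝ) + ((n:ℝ)-1) * f y s o := by
  show 1/(n:ℝ) + ∑ j ∈ Finset.univ.erase i0,
      f ((Function.update (fun _ : Fin n => s) i0 y) i0)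
        ((Function.update (fun _ : Fin n => s) i0 y) j) o = _
  rw [Function.update_self,
    Finset.sum_congr rfl
      (fun j hj => by rw [Function.update_of_ne (Finset.mem_erase.mp hj).1]),
    Finset.sum_const, Finset.card_erase_of_mem (mem_univ _), Finset.card_univ,
    Fintype.card_fin, nsmul_eq_mul]
  have h1 : (1:ℕ) ≤ n := by omega
  push_cast [h1]
  ring


end Mech

lemma upperSum_affine (r : Pref n) (c₀ m : ℝ) (h : Fin n → ℝ) (a : Fin n) :
    upperSum r (fun o => c₀ + m * h o) a
      = ((Finset.univ.filter (fun o => r o ≤ r a)).card : ℝ) * c₀ + m * upperSum r h a := by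
  rw [upperSum, upperSum, Finset.sum_add_distrib, Finset.sum_const, nsmul_eq_mul,
    Finset.mul_sum]

lemma C_of_SP (hn : 3 ≤ n) (hmech : IsMechanism (phiF f)) (hSP : StrategyProof (phiF f)) :
    Cnd f := by
  intro r x s c hc
  rcases Nat.eq_zero_or_pos c with rfl | hcpos
  · rw [T_zero, T_zero]
  have hc1 : c - 1 < n := by omega
  set a : Fin n := r.symm ⟨c-1, hc1⟩ with ha
  have hi0 : (0:ℕ) < n := by omega
  set i0 : Fin n := ⟨0, hi0⟩ with hi0d
  set prof := Function.update (fun _ : Fin n => s) i0 r with hprof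
  have hSPa := hSP prof i0 x a
  have hpi0 : prof i0 = r := Function.update_self ..
  have hupd : Function.update prof i0 x = Function.update (fun _ : Fin n => s) i0 x := by
    rw [hprof, Function.update_idem]
  have hr1 : phiF f prof i0 = fun o => 1/(n:ℝ) + ((n:ℝ)-1) * f r s o :=
    funext (fun o => row_eq hn hmech r s i0 o)
  have hr2 : phiF f (Function.update prof i0 x) i0
      = fun o => 1/(n:ℝ) + ((n:ℝ)-1) * f x s o := by
    rw [hupd]; exact funext (fun o => row_eq hn hmech x s i0 o)
  rw [hpi0, hr1, hr2, upperSum_affine, upperSum_affine] at hSPa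
  have hm : (0:ℝ) < (n:ℝ) - 1 := by
    have h3 : (3:ℝ) ≤ (n:ℝ) := by exact_mod_cast hn
    linarith
  have h2 : upperSum r (fun o => f x s o) a ≤ upperSum r (fun o => f r s o) a := by
    have := le_of_mul_le_mul_left (by linarith : ((n:ℝ)-1) * upperSum r (fun o => f x s o) a
      ≤ ((n:ℝ)-1) * upperSum r (fun o => f r s o) a) hm
    exact this
  rw [upperSum_eq_T, upperSum_eq_T] at h2
  have hra : ((r a : ℕ)) + 1 = c := by
    rw [ha, Equiv.apply_symm_apply]
    simp only []
    omega
  rwa [hra] at h2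

lemma SP_of_C (hn : 3 ≤ n) (hC : Cnd f) : StrategyProof (phiF f) := by
  intro prof i x a
  have hex : ∀ (y : Pref n), phiF f (Function.update prof i y) i
      = fun o => 1/(n:ℝ) + ∑ j ∈ Finset.univ.erase i, f y (prof j) o := by
    intro y
    funext o
    show 1/(n:ℝ) + ∑ j ∈ Finset.univ.erase i,
        f ((Function.update prof i y) i) ((Function.update prof i y) j) o = _
    rw [Function.update_self,
      Finset.sum_congr rfl
        (fun j hj => by rw [Function.update_of_ne (Finset.mem_erase.mp hj).1])]
  have hself : phiF f prof i
      = fun o => 1/(n:ℝ) + ∑ j ∈ Finset.univ.erase i, f (prof i) (prof j) o := by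
    have := hex (prof i)
    rwa [Function.update_eq_self] at this
  rw [hself, hex x]
  have hkey : ∀ (y : Pref n), upperSum (prof i)
      (fun o => 1/(n:ℝ) + ∑ j ∈ Finset.univ.erase i, f y (prof j) o) a
      = ((Finset.univ.filter (fun o => prof i o ≤ prof i a)).card : ℝ) * (1/(n:ℝ))
        + ∑ j ∈ Finset.univ.erase i, upperSum (prof i) (fun o => f y (prof j) o) a := by
    intro y
    rw [upperSum, Finset.sum_add_distrib, Finset.sum_const, nsmul_eq_mul]
    congr 1
    rw [Finset.sum_comm]
    rfl
  rw [hkey, hkey]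
  have hle : ∑ j ∈ Finset.univ.erase i, upperSum (prof i) (fun o => f x (prof j) o) a
      ≤ ∑ j ∈ Finset.univ.erase i, upperSum (prof i) (fun o => f (prof i) (prof j) o) a := by
    apply Finset.sum_le_sum
    intro j _
    rw [upperSum_eq_T, upperSum_eq_T]
    exact hC (prof i) x (prof j) ((prof i a : ℕ) + 1) (by omega)
  linarith

/-- Key extraction: two thresholds agreeing between `r'` and `r''` pin down equality
of transfers at the object ranked `c` by `r'`. -/
lemma key_eq (hC : Cnd f) (r r' r'' : Pref n) (c : ℕ) (hcn : c < n)
    (h1 : ∀ h : Fin n → ℝ, T r' h c = T r'' h c)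
    (h2 : ∀ h : Fin n → ℝ, T r' h (c+1) = T r'' h (c+1)) :
    f r' r (r'.symm ⟨c, hcn⟩) = f r'' r (r'.symm ⟨c, hcn⟩) := by
  have e1 : T r' (fun o => f r'' r o) c = T r' (fun o => f r' r o) c := by
    apply le_antisymm (hC r' r'' r c (by omega))
    have h := hC r'' r' r c (by omega)
    rwa [← h1, ← h1] at h
  have e2 : T r' (fun o => f r'' r o) (c+1) = T r' (fun o => f r' r o) (c+1) := by
    apply le_antisymm (hC r' r'' r (c+1) (by omega))
    have h := hC r'' r' r (c+1) (by omega)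
    rwa [← h2, ← h2] at h
  have s1 := T_succ r' (fun o => f r' r o) hcn
  have s2 := T_succ r' (fun o => f r'' r o) hcn
  rw [s1, s2, e1] at e2
  linarith

lemma SI_of_C (hn : 3 ≤ n) (hmech : IsMechanism (phiF f)) (hC : Cnd f) :
    SenderInvariant f := by
  have hant := hanti hn hmech
  intro r r' r'' t
  have hteta : (⟨(t : ℕ), t.isLt⟩ : Fin n) = t := rfl
  constructor
  · intro hk
    have h1 : ∀ h : Fin n → ℝ, T r' h (t : ℕ) = T r'' h (t : ℕ) := by
      intro h
      apply T_congr_down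
      intro k hklt
      exact hk k (by rw [Fin.le_def]; omega)
    have h2 : ∀ h : Fin n → ℝ, T r' h ((t : ℕ)+1) = T r'' h ((t : ℕ)+1) := by
      intro h
      apply T_congr_down
      intro k hklt
      exact hk k (by rw [Fin.le_def]; omega)
    have key := key_eq hC r r' r'' (t : ℕ) t.isLt h1 h2
    rw [hteta] at key
    rw [hant r' r (r'.symm t), hant r'' r (r'.symm t), key]
  · intro hk
    have h1 : ∀ h : Fin n → ℝ, T r' h (t : ℕ) = T r'' h (t : ℕ) := by
      intro h
      apply T_congr_up
      intro k hklt
      exact hk k (by rw [Fin.le_def]; omega)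
    have h2 : ∀ h : Fin n → ℝ, T r' h ((t : ℕ)+1) = T r'' h ((t : ℕ)+1) := by
      intro h
      apply T_congr_up
      intro k hklt
      exact hk k (by rw [Fin.le_def]; omega)
    have key := key_eq hC r r' r'' (t : ℕ) t.isLt h1 h2
    rw [hteta] at key
    rw [hant r' r (r'.symm t), hant r'' r (r'.symm t), key]

lemma SM_of_C (hC : Cnd f) : SwapMonotone f := by
  intro r r' a b hab
  set t : ℕ := (r' a : ℕ) with ht
  have htn : t < n := (r' a).isLt
  have htn1 : t + 1 < n := by rw [← hab]; exact (r' b).isLt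
  set x : Pref n := r'.trans (Equiv.swap (r' a) (r' b)) with hx
  have hxsymm : ∀ k, x.symm k = r'.symm (Equiv.swap (r' a) (r' b) k) := by
    intro k; rw [hx, Equiv.symm_trans_apply, Equiv.symm_swap]
  have hset : ∀ h : Fin n → ℝ, T r' h t = T x h t := by
    intro h
    apply T_congr_down
    intro k hk
    rw [hxsymm, Equiv.swap_apply_of_ne_of_ne]
    · exact Fin.ne_of_val_ne (by omega)
    · exact Fin.ne_of_val_ne (by omega)
  have e0 : T r' (fun o => f x r o) t = T r' (fun o => f r' r o) t := by
    apply le_antisymm (hC r' x r t (by omega))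
    have h := hC x r' r t (by omega)
    rwa [← hset, ← hset] at h
  have ineq := hC r' x r (t+1) (by omega)
  have s1 := T_succ r' (fun o => f r' r o) htn
  have s2 := T_succ r' (fun o => f x r o) htn
  have hsa : r'.symm ⟨t, htn⟩ = a := by
    rw [Equiv.symm_apply_eq]
  rw [s1, s2, e0, hsa] at ineq
  linarith

/-- The set of inverted pairs of `x` relative to `r`. -/
def invSet (r x : Pref n) : Finset (Fin n × Fin n) :=
  (Finset.univ ×ˢ Finset.univ).filter (fun oo => r oo.1 < r oo.2 ∧ x oo.2 < x oo.1)

lemma mem_invSet {r x : Pref n} {o o' : Fin n} :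
    (o, o') ∈ invSet r x ↔ r o < r o' ∧ x o' < x o := by
  simp [invSet]

lemma step_T (hSI : SenderInvariant f) (hSM : SwapMonotone f)
    (hant : ∀ (x s : Pref n) (a : Fin n), f s x a = - f x s a)
    (hrw : ∀ (x s : Pref n), ∑ a, f x s a = 0)
    (r r' : Pref n) (p q : Fin n)
    (hpq : (r' q : ℕ) = (r' p : ℕ) + 1) (hinv : r q < r p) (s : Pref n) (c : ℕ) :
    T r (fun o => f r' s o) c
      ≤ T r (fun o => f (r'.trans (Equiv.swap (r' p) (r' q))) s o) c := by
  set x : Pref n := r'.trans (Equiv.swap (r' p) (r' q)) with hx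
  have hxsymm : ∀ k, x.symm k = r'.symm (Equiv.swap (r' p) (r' q) k) := by
    intro k; rw [hx, Equiv.symm_trans_apply, Equiv.symm_swap]
  have hne : p ≠ q := by
    intro h; rw [h] at hinv; exact lt_irrefl _ hinv
  have hp : f x s p ≤ f r' s p := hSM s r' p q hpq
  have hoth : ∀ o, o ≠ p → o ≠ q → f x s o = f r' s o := by
    intro o hop hoq
    have hvp : (r' o : ℕ) ≠ (r' p : ℕ) := fun h => hop (r'.injective (Fin.ext h))
    have hvq : (r' o : ℕ) ≠ (r' q : ℕ) := fun h => hoq (r'.injective (Fin.ext h))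
    have key : f s r' (r'.symm (r' o)) = f s x (r'.symm (r' o)) := by
      rcases lt_or_gt_of_ne hvp with hlt | hgt
      · refine (hSI s r' x (r' o)).1 (fun k hk => ?_)
        rw [Fin.le_def] at hk
        rw [hxsymm, Equiv.swap_apply_of_ne_of_ne
          (Fin.ne_of_val_ne (by omega)) (Fin.ne_of_val_ne (by omega))]
      · refine (hSI s r' x (r' o)).2 (fun k hk => ?_)
        rw [Fin.le_def] at hk
        rw [hxsymm, Equiv.swap_apply_of_ne_of_ne
          (Fin.ne_of_val_ne (by omega)) (Fin.ne_of_val_ne (by omega))]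
    rw [Equiv.symm_apply_apply] at key
    have h1 := hant x s o
    have h2 := hant r' s o
    linarith
  have hsum : (f x s p - f r' s p) + (f x s q - f r' s q) = 0 := by
    have h1 := hrw x s
    have h2 := hrw r' s
    have h3 := sum_pair_support Finset.univ (fun o => f x s o - f r' s o) p q hne
      (fun o hop hoq => by show f x s o - f r' s o = 0; rw [hoth o hop hoq]; ring)
    rw [Finset.sum_sub_distrib, h1, h2] at h3
    simp only [if_pos (mem_univ p), if_pos (mem_univ q)] at h3
    linarith
  set U := Finset.univ.filter (fun o => (r o : ℕ) < c) with hU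
  have hsplit := sum_pair_support U (fun o => f x s o - f r' s o) p q hne
    (fun o hop hoq => by show f x s o - f r' s o = 0; rw [hoth o hop hoq]; ring)
  have hTdiff : T r (fun o => f x s o) c - T r (fun o => f r' s o) c
      = ∑ o ∈ U, (f x s o - f r' s o) := by
    rw [T, T, ← Finset.sum_sub_distrib]
  have hUimp : p ∈ U → q ∈ U := by
    intro hp'
    rw [hU, Finset.mem_filter] at hp' ⊢
    refine ⟨Finset.mem_univ _, ?_⟩
    rw [Fin.lt_def] at hinv
    omega
  by_cases hpU : p ∈ U
  · have hqU := hUimp hpU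
    simp only [if_pos hpU, if_pos hqU] at hsplit
    linarith
  · by_cases hqU : q ∈ U
    · simp only [if_neg hpU, if_pos hqU] at hsplit
      linarith
    · simp only [if_neg hpU, if_neg hqU] at hsplit
      linarith

lemma step_inv (r r' : Pref n) (p q : Fin n)
    (hpq : (r' q : ℕ) = (r' p : ℕ) + 1) (hinv : r q < r p) :
    invSet r (r'.trans (Equiv.swap (r' p) (r' q))) ⊂ invSet r r' := by
  set x : Pref n := r'.trans (Equiv.swap (r' p) (r' q)) with hx
  have hne : p ≠ q := by
    intro h; rw [h] at hinv; exact lt_irrefl _ hinv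
  have hxpF : x p = r' q := by
    rw [hx]; simp [Equiv.trans_apply, Equiv.swap_apply_left]
  have hxqF : x q = r' p := by
    rw [hx]; simp [Equiv.trans_apply, Equiv.swap_apply_right]
  have hxo : ∀ u : Fin n, u ≠ p → u ≠ q → x u = r' u := by
    intro u hup huq
    have h1 : r' u ≠ r' p := fun h => hup (r'.injective h)
    have h2 : r' u ≠ r' q := fun h => huq (r'.injective h)
    rw [hx]; simp [Equiv.trans_apply, Equiv.swap_apply_of_ne_of_ne h1 h2]
  have hvp : ∀ u : Fin n, u ≠ p → (r' u : ℕ) ≠ (r' p : ℕ) :=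
    fun u hu h => hu (r'.injective (Fin.ext h))
  have hvq : ∀ u : Fin n, u ≠ q → (r' u : ℕ) ≠ (r' q : ℕ) :=
    fun u hu h => hu (r'.injective (Fin.ext h))
  have hinvv : (r q : ℕ) < (r p : ℕ) := hinv
  have hsub : invSet r x ⊆ invSet r r' := by
    rintro ⟨o, o'⟩ hmem
    rw [mem_invSet] at hmem ⊢
    obtain ⟨h1, h2⟩ := hmem
    refine ⟨h1, ?_⟩
    rw [Fin.lt_def] at h1 h2 ⊢
    by_cases hop : o = p
    · by_cases hoq' : o' = q
      · rw [hop, hoq'] at h1; omega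
      · have hop' : o' ≠ p := by intro h; rw [hop, h] at h1; omega
        rw [hop] at h2 ⊢
        rw [hxpF, hxo o' hop' hoq'] at h2
        have := hvp o' hop'
        have := hvq o' hoq'
        omega
    · by_cases hoq : o = q
      · by_cases hop' : o' = p
        · rw [hoq, hop'] at h2 ⊢
          rw [hxpF, hxqF] at h2
          omega
        · have hoq' : o' ≠ q := by intro h; rw [hoq, h] at h1; omega
          rw [hoq] at h2 ⊢
          rw [hxqF, hxo o' hop' hoq'] at h2
          have := hvp o' hop'
          have := hvq o' hoq'
          omega
      · rw [hxo o hop hoq] at h2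
        have hvpo := hvp o hop
        have hvqo := hvq o hoq
        by_cases hop' : o' = p
        · rw [hop'] at h2 ⊢
          rw [hxpF] at h2
          omega
        · by_cases hoq' : o' = q
          · rw [hoq'] at h2 ⊢
            rw [hxqF] at h2
            omega
          · rw [hxo o' hop' hoq'] at h2
            omega
  have hQPmem : (q, p) ∈ invSet r r' :=
    mem_invSet.mpr ⟨hinv, by rw [Fin.lt_def]; omega⟩
  have hQPnot : (q, p) ∉ invSet r x := by
    intro h
    have h2 := (mem_invSet.mp h).2
    rw [hxpF, hxqF, Fin.lt_def] at h2
    omega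
  exact (Finset.ssubset_iff_of_subset hsub).mpr ⟨(q, p), hQPmem, hQPnot⟩

lemma exists_adj (r x : Pref n) (hne : x ≠ r) :
    ∃ p q : Fin n, (x q : ℕ) = (x p : ℕ) + 1 ∧ r q < r p := by
  by_contra hcon
  push_neg at hcon
  apply hne
  cases n with
  | zero => exact Equiv.ext fun k => k.elim0
  | succ m =>
    have hmono : StrictMono (fun k : Fin (m+1) => r (x.symm k)) := by
      rw [Fin.strictMono_iff_lt_succ]
      intro i
      have hcond : (x (x.symm i.succ) : ℕ) = (x (x.symm i.castSucc) : ℕ) + 1 := by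
        simp [Fin.val_succ, Fin.coe_castSucc]
      have h1 := hcon (x.symm i.castSucc) (x.symm i.succ) hcond
      have hne2 : x.symm i.castSucc ≠ x.symm i.succ := by
        intro h
        have hinj := x.symm.injective h
        have hv := congrArg Fin.val hinj
        simp [Fin.coe_castSucc, Fin.val_succ] at hv
      exact lt_of_le_of_ne h1 fun heq => hne2 (r.injective heq)
    have hid : (fun k : Fin (m+1) => r (x.symm k)) = id := by
      have hr : Set.range (fun k : Fin (m+1) => r (x.symm k))
          = Set.range (id : Fin (m+1) → Fin (m+1)) := by
        rw [Set.range_id]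
        exact Set.range_eq_univ.mpr (x.symm.trans r).surjective
      have hwf : WellFoundedLT (Fin (m+1)) := inferInstance
      exact (StrictMono.range_inj hmono (strictMono_id : StrictMono (id : Fin (m+1) → Fin (m+1)))).mp hr
    apply Equiv.ext
    intro o
    have h := congrFun hid (x o)
    simp only [Equiv.symm_apply_apply, id_eq] at h
    exact h.symm

lemma C_of_SISM (hSI : SenderInvariant f) (hSM : SwapMonotone f)
    (hant : ∀ (x s : Pref n) (a : Fin n), f s x a = - f x s a)
    (hrw : ∀ (x s : Pref n), ∑ a, f x s a = 0) : Cnd f := by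
  intro r x s c _
  suffices H : ∀ (N : ℕ) (x : Pref n), (invSet r x).card ≤ N →
      T r (fun o => f x s o) c ≤ T r (fun o => f r s o) c from H _ x le_rfl
  intro N
  induction N with
  | zero =>
    intro x hcard
    by_cases hxr : x = r
    · subst hxr; exact le_refl _
    · obtain ⟨p, q, hpq, hinv⟩ := exists_adj r x hxr
      exfalso
      have hd := Finset.card_lt_card (step_inv r x p q hpq hinv)
      omega
  | succ N ih =>
    intro x hcard
    by_cases hxr : x = r
    · subst hxr; exact le_refl _
    · obtain ⟨p, q, hpq, hinv⟩ := exists_adj r x hxr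
      have hstep := step_T hSI hSM hant hrw r x p q hpq hinv s c
      have hd := Finset.card_lt_card (step_inv r x p q hpq hinv)
      exact le_trans hstep (ih _ (by omega))

end SPaux

/-- A pairwise exchange mechanism is strategy-proof iff its transfer function is
sender invariant and swap monotone. -/
theorem sp_iff_sender_invariant_swap_monotone (n : ℕ) (hn : 3 ≤ n)
    (f : Pref n → Pref n → Fin n → ℝ) (hf : TransferBounded f)
    (hmech : IsMechanism (phiF f)) :
    StrategyProof (phiF f) ↔ (SenderInvariant f ∧ SwapMonotone f) := by
  have hant := SPaux.hanti hn hmech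
  have hrw := SPaux.hrow hn hmech
  constructor
  · intro hSP
    have hC := SPaux.C_of_SP hn hmech hSP
    exact ⟨SPaux.SI_of_C hn hmech hC, SPaux.SM_of_C hC⟩
  · rintro ⟨hSI, hSM⟩
    exact SPaux.SP_of_C hn (SPaux.C_of_SISM hSI hSM hant hrw)
end

section
/- Let φ^f be an envy-free pairwise exchange mechanism with transfer function f, and let ≻ be the preference with ranking a_1 ≻ a_2 ≻ … ≻ a_n. If ≻' satisfies σ(≻',k) = σ(≻,k) = a_k for all k ≤ t, then f(≻, ≻', a_t) = 0. Similarly, if ≻' satisfies σ(≻',k) = σ(≻,k) = a_k for all k ≥ t, then f(≻, ≻', a_t) = 0. -/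
open Finset

private theorem efzt_self {n : ℕ} (hn : 3 ≤ n) (f : Pref n → Pref n → Fin n → ℝ)
    (hmech : IsMechanism (phiF f)) : ∀ r a, f r r a = 0 := by
  intro r a
  have h := (hmech (fun _ => r)).2.2 a
  simp only [phiF] at h
  rw [Finset.sum_add_distrib] at h
  simp [Finset.sum_const, Finset.card_erase_of_mem, Finset.card_univ] at h
  have h1 : ((n:ℝ)) ≠ 0 := by exact_mod_cast (by omega : n ≠ 0)
  rw [mul_inv_cancel₀ h1] at h
  have h2 : ((n-1 : ℕ):ℝ) ≠ 0 := by exact_mod_cast (by omega : n - 1 ≠ 0)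
  rcases mul_eq_zero.1 (by linarith : (n:ℝ) * (↑(n-1) * f r r a) = 0) with h'|h'
  · exact absurd h' h1
  · rcases mul_eq_zero.1 h' with h''|h''
    · exact absurd h'' h2
    · exact h''
private theorem efzt_anti {n : ℕ} (hn : 3 ≤ n) (f : Pref n → Pref n → Fin n → ℝ)
    (hmech : IsMechanism (phiF f)) (hs : ∀ r a, f r r a = 0) :
    ∀ r r' a, f r' r a = - f r r' a := by
  intro r r' a
  haveI : NeZero n := ⟨by omega⟩
  have hc : ((n-1:ℕ):ℝ) = (n:ℝ)-1 := by
    rw [Nat.cast_sub (by omega : 1 ≤ n), Nat.cast_one]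
  set prof : Fin n → Pref n := fun i => if i = 0 then r else r' with hprof
  have key : ∀ i : Fin n, ∑ j ∈ Finset.univ.erase i, f (prof i) (prof j) a
      = if i = 0 then ((n:ℝ)-1) * f r r' a else f r' r a := by
    intro i
    by_cases hi : i = 0
    · subst hi
      rw [if_pos rfl]
      have hcong : ∀ j ∈ Finset.univ.erase (0:Fin n), f (prof 0) (prof j) a = f r r' a := by
        intro j hj
        have hj0 : j ≠ 0 := (Finset.mem_erase.1 hj).1
        simp [hprof, hj0]
      rw [Finset.sum_congr rfl hcong, Finset.sum_const,
        Finset.card_erase_of_mem (Finset.mem_univ _), Finset.card_univ, Fintype.card_fin,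
        nsmul_eq_mul, hc]
    · rw [if_neg hi]
      have hcong : ∀ j ∈ Finset.univ.erase i, f (prof i) (prof j) a
          = if j = 0 then f r' r a else 0 := by
        intro j hj
        simp only [hprof, if_neg hi]
        by_cases hj0 : j = 0
        · simp [hj0]
        · simp [hj0, hs]
      rw [Finset.sum_congr rfl hcong, Finset.sum_ite_eq']
      simp [Ne.symm hi]
  have h1 : ((n:ℝ)) ≠ 0 := by exact_mod_cast (by omega : n ≠ 0)
  have hcong2 : ∀ i ∈ Finset.univ.erase (0:Fin n),
      (if i = 0 then ((n:ℝ)-1) * f r r' a else f r' r a) = f r' r a := by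
    intro i hi
    rw [if_neg (Finset.mem_erase.1 hi).1]
  have hsplit : ∑ i : Fin n, (if i = 0 then ((n:ℝ)-1) * f r r' a else f r' r a)
      = ((n:ℝ)-1) * f r r' a + ((n:ℝ)-1) * f r' r a := by
    rw [← Finset.add_sum_erase _ _ (Finset.mem_univ (0 : Fin n)), if_pos rfl,
      Finset.sum_congr rfl hcong2, Finset.sum_const,
      Finset.card_erase_of_mem (Finset.mem_univ _), Finset.card_univ, Fintype.card_fin,
      nsmul_eq_mul, hc]
  have h := (hmech prof).2.2 a
  simp only [phiF] at h
  rw [Finset.sum_add_distrib, Finset.sum_congr rfl (fun i _ => key i), hsplit,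
    Finset.sum_const, Finset.card_univ, Fintype.card_fin, nsmul_eq_mul,
    one_div, mul_inv_cancel₀ h1] at h
  have h2 : ((n:ℝ)) - 1 ≠ 0 := by
    have : (3:ℝ) ≤ n := by exact_mod_cast hn
    linarith
  have h3 : ((n:ℝ)-1) * (f r r' a + f r' r a) = 0 := by ring_nf; ring_nf at h; linarith
  rcases mul_eq_zero.1 h3 with h'|h'
  · exact absurd h' h2
  · linarith
private theorem efzt_total {n : ℕ} (hn : 3 ≤ n) (f : Pref n → Pref n → Fin n → ℝ)
    (hmech : IsMechanism (phiF f)) : ∀ r r', ∑ a, f r r' a = 0 := by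
  intro r r'
  haveI : NeZero n := ⟨by omega⟩
  have h1 : ((n:ℝ)) ≠ 0 := by exact_mod_cast (by omega : n ≠ 0)
  have hc : ((n-1:ℕ):ℝ) = (n:ℝ)-1 := by
    rw [Nat.cast_sub (by omega : 1 ≤ n), Nat.cast_one]
  set prof : Fin n → Pref n := fun i => if i = 0 then r else r' with hprof
  have key : ∀ a, ∑ j ∈ Finset.univ.erase (0 : Fin n), f (prof 0) (prof j) a
      = ((n:ℝ)-1) * f r r' a := by
    intro a
    have hcong : ∀ j ∈ Finset.univ.erase (0:Fin n), f (prof 0) (prof j) a = f r r' a := by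
      intro j hj
      simp [hprof, (Finset.mem_erase.1 hj).1]
    rw [Finset.sum_congr rfl hcong, Finset.sum_const,
      Finset.card_erase_of_mem (Finset.mem_univ _), Finset.card_univ, Fintype.card_fin,
      nsmul_eq_mul, hc]
  have h := (hmech prof).2.1 0
  simp only [phiF] at h
  rw [Finset.sum_add_distrib, Finset.sum_congr rfl (fun a _ => key a), ← Finset.mul_sum,
    Finset.sum_const, Finset.card_univ, Fintype.card_fin, nsmul_eq_mul,
    one_div, mul_inv_cancel₀ h1] at h
  have h2 : ((n:ℝ)) - 1 ≠ 0 := by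
    have : (3:ℝ) ≤ n := by exact_mod_cast hn
    linarith
  rcases mul_eq_zero.1 (by linarith : ((n:ℝ)-1) * (∑ a, f r r' a) = 0) with h'|h'
  · exact absurd h' h2
  · exact h'
private theorem efzt_pre {n : ℕ} (hn : 3 ≤ n) (f : Pref n → Pref n → Fin n → ℝ)
    (hef : EnvyFree (phiF f)) (hs : ∀ r a, f r r a = 0)
    (ha : ∀ r r' a, f r' r a = - f r r' a) :
    ∀ (r r' : Pref n) (m : Fin n),
      0 ≤ ∑ k ∈ Finset.Iic m, f r r' (r.symm k) ∧
      ∑ k ∈ Finset.Iic m, f r r' (r'.symm k) ≤ 0 := by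
  intro r r' m
  haveI : NeZero n := ⟨by omega⟩
  have h01 : (0 : Fin n) ≠ 1 := by
    rw [Fin.ne_iff_vne, Fin.val_zero, Fin.val_one', Nat.mod_eq_of_lt (by omega)]
    omega
  have hnpos : (0:ℝ) < n := by
    have : (3:ℝ) ≤ n := by exact_mod_cast hn
    linarith
  have hc : ((n-1:ℕ):ℝ) = (n:ℝ)-1 := by
    rw [Nat.cast_sub (by omega : 1 ≤ n), Nat.cast_one]
  set prof : Fin n → Pref n := fun i => if i = 1 then r' else r with hprof
  have hp0 : prof 0 = r := if_neg h01
  have hp1 : prof 1 = r' := if_pos rfl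
  have hdiff : ∀ o, phiF f prof 0 o - phiF f prof 1 o = (n:ℝ) * f r r' o := by
    intro o
    have hrow0 : ∑ j ∈ Finset.univ.erase (0:Fin n), f (prof 0) (prof j) o = f r r' o := by
      have hcong : ∀ j ∈ Finset.univ.erase (0:Fin n),
          f (prof 0) (prof j) o = if j = 1 then f r r' o else 0 := by
        intro j hj
        simp only [hprof, if_neg h01]
        by_cases hj1 : j = 1
        · simp [hj1]
        · simp [hj1, hs]
      rw [Finset.sum_congr rfl hcong, Finset.sum_ite_eq']
      simp [h01.symm]
    have hrow1 : ∑ j ∈ Finset.univ.erase (1:Fin n), f (prof 1) (prof j) o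
        = ((n:ℝ)-1) * f r' r o := by
      have hcong : ∀ j ∈ Finset.univ.erase (1:Fin n), f (prof 1) (prof j) o = f r' r o := by
        intro j hj
        simp [hprof, (Finset.mem_erase.1 hj).1]
      rw [Finset.sum_congr rfl hcong, Finset.sum_const,
        Finset.card_erase_of_mem (Finset.mem_univ _), Finset.card_univ, Fintype.card_fin,
        nsmul_eq_mul, hc]
    simp only [phiF, hrow0, hrow1, ha r r' o]
    ring
  constructor
  · have e := hef prof 0 1 (r.symm m)
    rw [hp0] at e
    unfold upperSum at e
    have key : ∑ o ∈ Finset.univ.filter (fun o => r o ≤ r (r.symm m)),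
        (phiF f prof 0 o - phiF f prof 1 o)
        = (n:ℝ) * ∑ k ∈ Finset.Iic m, f r r' (r.symm k) := by
      rw [Finset.sum_congr rfl (fun o _ => hdiff o), ← Finset.mul_sum]
      congr 1
      simp only [Equiv.apply_symm_apply]
      exact Finset.sum_equiv r (fun i => by simp) (fun i _ => by simp)
    rw [Finset.sum_sub_distrib] at key
    have : 0 ≤ (n:ℝ) * ∑ k ∈ Finset.Iic m, f r r' (r.symm k) := by
      rw [← key]; linarith
    exact (mul_nonneg_iff_of_pos_left hnpos).1 this
  · have e := hef prof 1 0 (r'.symm m)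
    rw [hp1] at e
    unfold upperSum at e
    have key : ∑ o ∈ Finset.univ.filter (fun o => r' o ≤ r' (r'.symm m)),
        (phiF f prof 0 o - phiF f prof 1 o)
        = (n:ℝ) * ∑ k ∈ Finset.Iic m, f r r' (r'.symm k) := by
      rw [Finset.sum_congr rfl (fun o _ => hdiff o), ← Finset.mul_sum]
      congr 1
      simp only [Equiv.apply_symm_apply]
      exact Finset.sum_equiv r' (fun i => by simp) (fun i _ => by simp)
    rw [Finset.sum_sub_distrib] at key
    have : (n:ℝ) * ∑ k ∈ Finset.Iic m, f r r' (r'.symm k) ≤ 0 := by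
      rw [← key]; linarith
    exact nonpos_of_mul_nonpos_right this hnpos

private lemma efzt_sum_Iic_Ioi {n : ℕ} (m : Fin n) (u : Fin n → ℝ) :
    ∑ k ∈ Finset.Iic m, u k + ∑ k ∈ Finset.Ioi m, u k = ∑ k, u k := by
  rw [← Finset.sum_union (by simp [Finset.disjoint_left])]
  congr 1
  ext x; simp [le_or_gt]

private lemma efzt_sum_Iio_Ici {n : ℕ} (m : Fin n) (u : Fin n → ℝ) :
    ∑ k ∈ Finset.Iio m, u k + ∑ k ∈ Finset.Ici m, u k = ∑ k, u k := by
  rw [← Finset.sum_union (by simp [Finset.disjoint_left])]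
  congr 1
  ext x; simp [lt_or_ge]

private lemma efzt_iio_cases {n : ℕ} (m : Fin n) :
    Finset.Iio m = ∅ ∨ ∃ j : Fin n, Finset.Iio m = Finset.Iic j := by
  rcases m with ⟨mv, hm⟩
  cases mv with
  | zero => left; ext x; simp [Fin.lt_def]
  | succ j =>
    right
    refine ⟨⟨j, by omega⟩, ?_⟩
    ext x; simp [Fin.lt_def, Fin.le_def, Nat.lt_succ_iff]

private lemma efzt_sum_Iic_insert {n : ℕ} (m : Fin n) (u : Fin n → ℝ) :
    ∑ k ∈ Finset.Iic m, u k = u m + ∑ k ∈ Finset.Iio m, u k := by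
  rw [← Finset.Iio_insert, Finset.sum_insert (by simp)]

private lemma efzt_sum_Ici_insert {n : ℕ} (m : Fin n) (u : Fin n → ℝ) :
    ∑ k ∈ Finset.Ici m, u k = u m + ∑ k ∈ Finset.Ioi m, u k := by
  rw [← Finset.Ioi_insert, Finset.sum_insert (by simp)]
/-- In an envy-free pairwise exchange mechanism, if two preferences agree on the
top `t` objects (resp. the bottom objects from position `t` on), there is no
transfer of the `t`-th ranked object between them. -/
theorem ef_zero_transfers (n : ℕ) (hn : 3 ≤ n)
    (f : Pref n → Pref n → Fin n → ℝ) (hf : TransferBounded f)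
    (hmech : IsMechanism (phiF f)) (hef : EnvyFree (phiF f)) :
    ∀ (r r' : Pref n) (t : Fin n),
      ((∀ k, k ≤ t → r'.symm k = r.symm k) → f r r' (r.symm t) = 0) ∧
      ((∀ k, t ≤ k → r'.symm k = r.symm k) → f r r' (r.symm t) = 0) := by
  intro r r' t
  have hs := efzt_self hn f hmech
  have ha := efzt_anti hn f hmech hs
  have htot := efzt_total hn f hmech
  have hp := efzt_pre hn f hef hs ha
  set u : Fin n → ℝ := fun k => f r r' (r.symm k) with hu
  set v : Fin n → ℝ := fun k => f r r' (r'.symm k) with hv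
  have hU : ∀ m, 0 ≤ ∑ k ∈ Finset.Iic m, u k := fun m => (hp r r' m).1
  have hV : ∀ m, ∑ k ∈ Finset.Iic m, v k ≤ 0 := fun m => (hp r r' m).2
  have htu : ∑ k, u k = 0 := (Equiv.sum_comp r.symm (f r r')).trans (htot r r')
  have htv : ∑ k, v k = 0 := (Equiv.sum_comp r'.symm (f r r')).trans (htot r r')
  have hUio : ∀ m, 0 ≤ ∑ k ∈ Finset.Iio m, u k := by
    intro m
    rcases efzt_iio_cases m with h | ⟨j, h⟩
    · simp [h]
    · rw [h]; exact hU j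
  have hVio : ∀ m, ∑ k ∈ Finset.Iio m, v k ≤ 0 := by
    intro m
    rcases efzt_iio_cases m with h | ⟨j, h⟩
    · simp [h]
    · rw [h]; exact hV j
  have hUoi : ∀ m, ∑ k ∈ Finset.Ioi m, u k ≤ 0 := by
    intro m
    have := efzt_sum_Iic_Ioi m u
    rw [htu] at this
    linarith [hU m]
  have hVoi : ∀ m, 0 ≤ ∑ k ∈ Finset.Ioi m, v k := by
    intro m
    have := efzt_sum_Iic_Ioi m v
    rw [htv] at this
    linarith [hV m]
  have hUci : ∀ m, ∑ k ∈ Finset.Ici m, u k ≤ 0 := by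
    intro m
    have := efzt_sum_Iio_Ici m u
    rw [htu] at this
    linarith [hUio m]
  have hVci : ∀ m, 0 ≤ ∑ k ∈ Finset.Ici m, v k := by
    intro m
    have := efzt_sum_Iio_Ici m v
    rw [htv] at this
    linarith [hVio m]
  constructor
  · intro h
    have heqIic : ∑ k ∈ Finset.Iic t, u k = ∑ k ∈ Finset.Iic t, v k :=
      Finset.sum_congr rfl fun k hk => by
        simp only [hu, hv, h k (Finset.mem_Iic.1 hk)]
    have heqIio : ∑ k ∈ Finset.Iio t, u k = ∑ k ∈ Finset.Iio t, v k :=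
      Finset.sum_congr rfl fun k hk => by
        simp only [hu, hv, h k (le_of_lt (Finset.mem_Iio.1 hk))]
    have h1 : ∑ k ∈ Finset.Iic t, u k = 0 :=
      le_antisymm (heqIic ▸ hV t) (hU t)
    have h2 : ∑ k ∈ Finset.Iio t, u k = 0 :=
      le_antisymm (heqIio ▸ hVio t) (hUio t)
    have := efzt_sum_Iic_insert t u
    show u t = 0
    rw [h1, h2] at this
    linarith
  · intro h
    have heqIci : ∑ k ∈ Finset.Ici t, u k = ∑ k ∈ Finset.Ici t, v k :=
      Finset.sum_congr rfl fun k hk => by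
        simp only [hu, hv, h k (Finset.mem_Ici.1 hk)]
    have heqIoi : ∑ k ∈ Finset.Ioi t, u k = ∑ k ∈ Finset.Ioi t, v k :=
      Finset.sum_congr rfl fun k hk => by
        simp only [hu, hv, h k (le_of_lt (Finset.mem_Ioi.1 hk))]
    have h1 : ∑ k ∈ Finset.Ici t, u k = 0 :=
      le_antisymm (hUci t) (heqIci ▸ hVci t)
    have h2 : ∑ k ∈ Finset.Ioi t, u k = 0 :=
      le_antisymm (hUoi t) (heqIoi ▸ hVoi t)
    have := efzt_sum_Ici_insert t u
    show u t = 0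
    rw [h1, h2] at this
    linarith
end

section
/- Let φ^f be an envy-free pairwise exchange mechanism with transfer function f, and let ≻ be the preference with ranking a_1 ≻ a_2 ≻ … ≻ a_n. Then for every preference ≻' ∈ R and every t ∈ {1,…,n}: Σ_{k=1}^t f(≻, ≻', a_k) ≥ 0. -/
open Finset

section Aux

variable {n : ℕ}

lemma self_zero (hn : 3 ≤ n) (f : Pref n → Pref n → Fin n → ℝ)
    (hmech : IsMechanism (phiF f)) (r : Pref n) (a : Fin n) : f r r a = 0 := by
  have h := (hmech (fun _ => r)).2.2 a
  simp only [phiF] at h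
  have hn3 : (3 : ℝ) ≤ (n : ℝ) := by exact_mod_cast hn
  have hn0 : (n : ℝ) ≠ 0 := by linarith
  have hc : ((n - 1 : ℕ) : ℝ) = (n : ℝ) - 1 := by
    have h1 : (1:ℕ) ≤ n := by omega
    push_cast [h1]; ring
  have h2 : ∀ i : Fin n, ∑ j ∈ univ.erase i, f r r a = ((n : ℝ) - 1) * f r r a := by
    intro i
    rw [Finset.sum_const, card_erase_of_mem (mem_univ i), card_univ, Fintype.card_fin,
      nsmul_eq_mul, hc]
  have e1 : ∑ i : Fin n, (1 / (n:ℝ) + ∑ j ∈ univ.erase i, f r r a)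
      = ∑ _i : Fin n, (1 / (n:ℝ) + ((n : ℝ) - 1) * f r r a) :=
    Finset.sum_congr rfl (fun i _ => by rw [h2 i])
  rw [e1, Finset.sum_const, card_univ, Fintype.card_fin, nsmul_eq_mul, mul_add,
    mul_one_div_cancel hn0] at h
  have h3 : (n:ℝ) * (((n:ℝ) - 1) * f r r a) = 0 := by linarith
  rcases mul_eq_zero.mp h3 with h4 | h4
  · exact absurd h4 hn0
  rcases mul_eq_zero.mp h4 with h5 | h5
  · exfalso; linarith
  · exact h5

end Aux

/-- In an envy-free pairwise exchange mechanism, the total transfer received by any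
agent over the top `t` objects of her preference, from any other agent, is
nonnegative. -/
theorem ef_transfer_nonneg (n : ℕ) (hn : 3 ≤ n)
    (f : Pref n → Pref n → Fin n → ℝ) (hf : TransferBounded f)
    (hmech : IsMechanism (phiF f)) (hef : EnvyFree (phiF f)) :
    ∀ (r r' : Pref n) (t : ℕ), 1 ≤ t → t ≤ n → 0 ≤ topSum r (f r r') t := by
  intro r r' t ht1 htn
  have hn3 : (3 : ℝ) ≤ (n : ℝ) := by exact_mod_cast hn
  have hn0 : (n : ℝ) ≠ 0 := by linarith
  have hc : ((n - 1 : ℕ) : ℝ) = (n : ℝ) - 1 := by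
    have h1 : (1:ℕ) ≤ n := by omega
    push_cast [h1]; ring
  have hsz := self_zero hn f hmech
  set i0 : Fin n := ⟨0, by omega⟩ with hi0
  set i1 : Fin n := ⟨1, by omega⟩ with hi1
  have h10 : i1 ≠ i0 := by simp [hi0, hi1, Fin.ext_iff]
  set p0 : Fin n → Pref n := fun k => if k = i0 then r' else r with hp0
  have hp0a : p0 i0 = r' := by simp [hp0]
  have hp0b : ∀ j : Fin n, j ≠ i0 → p0 j = r := fun j hj => if_neg hj
  have hcard : (univ.erase i0).card = n - 1 := by
    rw [card_erase_of_mem (mem_univ i0), card_univ, Fintype.card_fin]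
  -- antisymmetry: f r' r a = - f r r' a
  have hanti : ∀ a : Fin n, f r' r a = - f r r' a := by
    intro a
    have h := (hmech p0).2.2 a
    simp only [phiF] at h
    set G : Fin n → ℝ := fun i => ∑ j ∈ univ.erase i, f (p0 i) (p0 j) a with hG
    have eG0 : G i0 = ((n:ℝ) - 1) * f r' r a := by
      have e : ∑ j ∈ univ.erase i0, f (p0 i0) (p0 j) a
          = ∑ _j ∈ univ.erase i0, f r' r a :=
        Finset.sum_congr rfl (fun j hj => by rw [hp0a, hp0b j (mem_erase.mp hj).1])
      rw [hG]; simp only []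
      rw [e, Finset.sum_const, hcard, nsmul_eq_mul, hc]
    have eG1 : ∀ i : Fin n, i ≠ i0 → G i = f r r' a := by
      intro i hi
      have hmem : i0 ∈ univ.erase i := mem_erase.mpr ⟨Ne.symm hi, mem_univ i0⟩
      have e : ∑ j ∈ (univ.erase i).erase i0, f (p0 i) (p0 j) a
          = ∑ _j ∈ (univ.erase i).erase i0, (0:ℝ) :=
        Finset.sum_congr rfl (fun j hj => by
          rw [hp0b i hi, hp0b j (mem_erase.mp hj).1, hsz r a])
      rw [hG]; simp only []
      rw [← Finset.add_sum_erase _ _ hmem, e, Finset.sum_const, smul_zero, add_zero,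
        hp0b i hi, hp0a]
    have esum : ∑ i : Fin n, (1 / (n:ℝ) + G i) = ∑ i : Fin n, (1/(n:ℝ)) + ∑ i : Fin n, G i :=
      Finset.sum_add_distrib
    have e1 : ∑ i : Fin n, (1/(n:ℝ)) = 1 := by
      rw [Finset.sum_const, card_univ, Fintype.card_fin, nsmul_eq_mul, mul_one_div_cancel hn0]
    have e2 : ∑ i : Fin n, G i = G i0 + ∑ i ∈ univ.erase i0, G i :=
      (Finset.add_sum_erase _ _ (mem_univ i0)).symm
    have e3 : ∑ i ∈ univ.erase i0, G i = ((n:ℝ) - 1) * f r r' a := by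
      have e : ∑ i ∈ univ.erase i0, G i = ∑ _i ∈ univ.erase i0, f r r' a :=
        Finset.sum_congr rfl (fun i hi => eG1 i (mem_erase.mp hi).1)
      rw [e, Finset.sum_const, hcard, nsmul_eq_mul, hc]
    rw [esum, e1, e2, eG0, e3] at h
    have hne : (n : ℝ) - 1 ≠ 0 := by intro hx; rw [hx] at h; linarith
    have h4 : ((n:ℝ) - 1) * (f r' r a + f r r' a) = 0 := by linarith
    have h5 := (mul_eq_zero.mp h4).resolve_left hne
    linarith
  -- envy-freeness between agent i1 (pref r) and agent i0 (pref r')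
  have hef1 := hef p0 i1 i0
  have hp1 : p0 i1 = r := hp0b i1 h10
  rw [hp1] at hef1
  have htlt : t - 1 < n := by omega
  set a : Fin n := r.symm ⟨t - 1, htlt⟩ with ha
  have hra : r a = ⟨t - 1, htlt⟩ := r.apply_symm_apply _
  have hS : Finset.univ.filter (fun o => r o ≤ r a)
      = Finset.univ.filter (fun o : Fin n => ((r o : ℕ) < t)) := by
    apply Finset.filter_congr
    intro o _
    rw [hra, Fin.le_def]
    simp only [eq_iff_iff]
    omega
  have hd := hef1 a
  simp only [upperSum, phiF, hS] at hd
  set S := Finset.univ.filter (fun o : Fin n => ((r o : ℕ) < t)) with hSdef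
  have hv1 : ∀ o, ∑ j ∈ univ.erase i1, f (p0 i1) (p0 j) o = f r r' o := by
    intro o
    have hmem : i0 ∈ univ.erase i1 := mem_erase.mpr ⟨Ne.symm h10, mem_univ i0⟩
    have e : ∑ j ∈ (univ.erase i1).erase i0, f (p0 i1) (p0 j) o
        = ∑ _j ∈ (univ.erase i1).erase i0, (0:ℝ) :=
      Finset.sum_congr rfl (fun j hj => by
        rw [hp1, hp0b j (mem_erase.mp hj).1, hsz r o])
    rw [← Finset.add_sum_erase _ _ hmem, e, Finset.sum_const, smul_zero, add_zero, hp1, hp0a]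
  have hv0 : ∀ o, ∑ j ∈ univ.erase i0, f (p0 i0) (p0 j) o = -(((n:ℝ) - 1) * f r r' o) := by
    intro o
    have e : ∑ j ∈ univ.erase i0, f (p0 i0) (p0 j) o
        = ∑ _j ∈ univ.erase i0, (- f r r' o) :=
      Finset.sum_congr rfl (fun j hj => by
        rw [hp0a, hp0b j (mem_erase.mp hj).1, hanti o])
    rw [e, Finset.sum_const, hcard, nsmul_eq_mul, hc]; ring
  have e5 : ∑ x ∈ S, (1/(n:ℝ) + ∑ j ∈ univ.erase i1, f (p0 i1) (p0 j) x)
      = ∑ x ∈ S, (1/(n:ℝ)) + ∑ x ∈ S, f r r' x := by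
    rw [← Finset.sum_add_distrib]
    exact Finset.sum_congr rfl (fun o _ => by rw [hv1 o])
  have e6 : ∑ x ∈ S, (1/(n:ℝ) + ∑ j ∈ univ.erase i0, f (p0 i0) (p0 j) x)
      = ∑ x ∈ S, (1/(n:ℝ)) + (-(((n:ℝ) - 1) * ∑ x ∈ S, f r r' x)) := by
    have e6a : ∑ x ∈ S, (1/(n:ℝ) + ∑ j ∈ univ.erase i0, f (p0 i0) (p0 j) x)
        = ∑ x ∈ S, (1/(n:ℝ) + (-(((n:ℝ) - 1) * f r r' x))) :=
      Finset.sum_congr rfl (fun o _ => by rw [hv0 o])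
    rw [e6a, Finset.sum_add_distrib]
    congr 1
    rw [Finset.mul_sum]
    simp
  rw [e5, e6] at hd
  have hBn : 0 ≤ ∑ o ∈ S, f r r' o := by
    by_contra hneg
    push_neg at hneg
    nlinarith
  simpa [topSum, hSdef] using hBn
end

section
/- A pairwise exchange mechanism is strategy-proof if and only if it is envy-free. -/
open Finset

/-!
Write `T_W(s, t) = ∑ o ∈ W, f s t o`. Double stochasticity at every profile forces `f s s = 0` and
`f s t = -f t s`, and agent `i`'s probability of an upper contour set `W` of her preference is
`|W|/n + ∑ k ≠ i, T_W(≻ᵢ, ≻ₖ)`; so strategy-proofness and envy-freeness are inequalities between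
such sums.

If the mechanism is strategy-proof, letting everybody else report `u` shows `T_W(s, u) ≤ T_W(r, u)`
whenever `W` is an upper contour set of `r`; together with antisymmetry this gives envy-freeness
term by term.

Conversely, under envy-freeness a profile with three distinct reports shows (this needs `n ≥ 3`)
that `T_W(r, u)` is the same nonnegative number `α_W(u)` for every `r` having `W` as an upper
contour set (`baseline`). Hence `f s u x = α_{U ∪ {x}}(u) - α_U(u)` with `U` the strict upper
contour set of `x` under `s`. By this formula and antisymmetry, the drop
`α_{D ∪ {x}}(u) - α_D(u) - α_{D ∪ {x, y}}(u) + α_{D ∪ {y}}(u)` in the marginal value of `x` depends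
on `u` only through the strict upper contour set of `x` under `u`, and likewise of `y`. Changing `u`
while keeping one of these two sets fixed, we reach a preference at which the drop is
`α_{D ∪ {y}} ≥ 0`; so `W ↦ α_W(u)` is submodular. Adding the objects of `W` in the order of `s` then
bounds `T_W(s, u)` by `α_W(u) = T_W(≻ᵢ, u)`, which is strategy-proofness.
-/

namespace PairwiseExchange

variable {n : ℕ}

section Preferences

def IsUpperContour (r : Pref n) (W : Finset (Fin n)) : Prop :=
  ∀ a ∈ W, ∀ b ∉ W, r a < r b

def strictUpperContour (r : Pref n) (x : Fin n) : Finset (Fin n) :=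
  univ.filter (fun o => r o < r x)

lemma notMem_strictUpperContour (r : Pref n) (x : Fin n) : x ∉ strictUpperContour r x := by
  simp [strictUpperContour]

lemma isUpperContour_strictUpperContour (r : Pref n) (x : Fin n) :
    IsUpperContour r (strictUpperContour r x) := by
  intro a ha b hb
  simp only [strictUpperContour, mem_filter, mem_univ, true_and, not_lt] at ha hb
  exact ha.trans_le hb

lemma isUpperContour_insert_strictUpperContour (r : Pref n) (x : Fin n) :
    IsUpperContour r (insert x (strictUpperContour r x)) := by
  intro a ha b hb
  simp only [strictUpperContour, mem_insert, mem_filter, mem_univ, true_and, not_or,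
    not_lt] at ha hb
  have hxb : r x < r b := hb.2.lt_of_ne (r.injective.ne (Ne.symm hb.1))
  rcases ha with rfl | ha
  · exact hxb
  · exact ha.trans hxb

lemma stochDom_iff (r : Pref n) (p q : Fin n → ℝ) :
    StochDom r p q ↔ ∀ W, IsUpperContour r W → ∑ o ∈ W, q o ≤ ∑ o ∈ W, p o := by
  constructor
  · intro h W hW
    rcases W.eq_empty_or_nonempty with rfl | hne
    · simp
    obtain ⟨a, ha, hmax⟩ := W.exists_max_image r hne
    have hWa : univ.filter (fun o => r o ≤ r a) = W := by
      ext o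
      simp only [mem_filter, mem_univ, true_and]
      exact ⟨fun hle => by_contra fun ho => (hW a ha o ho).not_ge hle, hmax o⟩
    simpa only [upperSum, hWa] using h a
  · intro h a
    apply h
    intro b hb c hc
    simp only [mem_filter, mem_univ, true_and, not_le] at hb hc
    exact hb.trans_lt hc

noncomputable def rankBy (key : Fin n → ℕ) : Pref n := (Tuple.sort key).symm

lemma rankBy_lt_rankBy (key : Fin n → ℕ) {a b : Fin n} (h : key a < key b) :
    rankBy key a < rankBy key b := by
  by_contra hle
  have hmono := Tuple.monotone_sort key (not_lt.mp hle)
  simp only [rankBy, Function.comp_apply, Equiv.apply_symm_apply] at hmono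
  omega

lemma isUpperContour_rankBy {key : Fin n → ℕ} {W : Finset (Fin n)}
    (h : ∀ a ∈ W, ∀ b ∉ W, key a < key b) : IsUpperContour (rankBy key) W :=
  fun a ha b hb => rankBy_lt_rankBy key (h a ha b hb)

lemma exists_isUpperContour (W : Finset (Fin n)) : ∃ r, IsUpperContour r W :=
  ⟨rankBy (fun o => if o ∈ W then 0 else 1),
    isUpperContour_rankBy fun a ha b hb => by simp [ha, hb]⟩

lemma strictUpperContour_rankBy {key : Fin n → ℕ} {x : Fin n} (hx : ∀ o, key o = key x → o = x) :
    strictUpperContour (rankBy key) x = univ.filter (fun o => key o < key x) := by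
  ext o
  simp only [strictUpperContour, mem_filter, mem_univ, true_and]
  refine ⟨fun hlt => ?_, rankBy_lt_rankBy key⟩
  rcases lt_trichotomy (key o) (key x) with h | h | h
  · exact h
  · exact absurd hlt (by rw [hx o h]; exact lt_irrefl _)
  · exact absurd (rankBy_lt_rankBy key h) (not_lt.mpr hlt.le)

noncomputable def blockPref (A : Finset (Fin n)) (x : Fin n) (B : Finset (Fin n)) (y : Fin n) :
    Pref n :=
  rankBy fun o => if o ∈ A then 0 else if o = x then 1 else if o ∈ B then 2 else if o = y then 3
    else 4

lemma strictUpperContour_blockPref_left {A : Finset (Fin n)} {x : Fin n} (hx : x ∉ A)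
    (B : Finset (Fin n)) (y : Fin n) : strictUpperContour (blockPref A x B y) x = A := by
  rw [blockPref, strictUpperContour_rankBy]
  · ext o; simp only [mem_filter, mem_univ, true_and]; split_ifs <;> simp_all
  · intro o; split_ifs <;> simp_all

lemma strictUpperContour_blockPref_right {A B : Finset (Fin n)} {x y : Fin n} (hyA : y ∉ A)
    (hyB : y ∉ B) (hyx : y ≠ x) : strictUpperContour (blockPref A x B y) y = insert x (A ∪ B) := by
  rw [blockPref, strictUpperContour_rankBy]
  · ext o; simp only [mem_filter, mem_univ, true_and, mem_insert, mem_union]; split_ifs <;> simp_all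
  · intro o; split_ifs <;> simp_all

end Preferences

section Transfers

variable (f : Pref n → Pref n → Fin n → ℝ)

def transferOn (W : Finset (Fin n)) (s t : Pref n) : ℝ :=
  ∑ o ∈ W, f s t o

lemma sum_phiF_apply (p : Fin n → Pref n) (i : Fin n) (W : Finset (Fin n)) :
    ∑ o ∈ W, phiF f p i o = W.card / n + ∑ k ∈ univ.erase i, transferOn f W (p i) (p k) := by
  simp only [phiF, transferOn, sum_add_distrib, sum_const, nsmul_eq_mul, mul_one_div]
  rw [sum_comm]

lemma strategyProof_iff : StrategyProof (phiF f) ↔ ∀ (p : Fin n → Pref n) (i : Fin n) (r : Pref n)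
    (W : Finset (Fin n)), IsUpperContour (p i) W →
      ∑ k ∈ univ.erase i, transferOn f W r (p k)
        ≤ ∑ k ∈ univ.erase i, transferOn f W (p i) (p k) := by
  have hdev : ∀ p i r W, ∑ o ∈ W, phiF f (Function.update p i r) i o =
      W.card / n + ∑ k ∈ univ.erase i, transferOn f W r (p k) := fun p i r W => by
    rw [sum_phiF_apply, Function.update_self]
    congr 1
    exact sum_congr rfl fun k hk => by rw [Function.update_of_ne (ne_of_mem_erase hk)]
  simp only [StrategyProof, stochDom_iff, sum_phiF_apply, hdev, add_le_add_iff_left]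

lemma envyFree_iff : EnvyFree (phiF f) ↔ ∀ (p : Fin n → Pref n) (i j : Fin n)
    (W : Finset (Fin n)), IsUpperContour (p i) W →
      ∑ k ∈ univ.erase j, transferOn f W (p j) (p k)
        ≤ ∑ k ∈ univ.erase i, transferOn f W (p i) (p k) := by
  simp only [EnvyFree, stochDom_iff, sum_phiF_apply, add_le_add_iff_left]

noncomputable def baseline (W : Finset (Fin n)) (u : Pref n) : ℝ :=
  transferOn f W (exists_isUpperContour W).choose u

noncomputable def marginal (W : Finset (Fin n)) (x : Fin n) (u : Pref n) : ℝ :=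
  baseline f (insert x W) u - baseline f W u

noncomputable def marginalDrop (D : Finset (Fin n)) (x y : Fin n) (u : Pref n) : ℝ :=
  marginal f D x u - marginal f (insert y D) x u

lemma baseline_empty (u : Pref n) : baseline f ∅ u = 0 := by
  simp [baseline, transferOn]

lemma marginalDrop_comm (D : Finset (Fin n)) (x y : Fin n) (u : Pref n) :
    marginalDrop f D x y u = marginalDrop f D y x u := by
  simp only [marginalDrop, marginal, insert_comm x y]
  ring

end Transfers

lemma sum_erase_eq_mul {i : Fin n} {g : Fin n → ℝ} {c : ℝ} (h : ∀ k ≠ i, g k = c) :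
    ∑ k ∈ univ.erase i, g k = (n - 1) * c := by
  rw [sum_congr rfl fun k hk => h k (ne_of_mem_erase hk), sum_const, card_erase_of_mem (mem_univ i),
    card_univ, Fintype.card_fin, nsmul_eq_mul, Nat.cast_pred (Fin.pos i)]

lemma sum_erase_eq_add_mul {i j : Fin n} (hji : j ≠ i) {g : Fin n → ℝ} {c : ℝ}
    (h : ∀ k, k ≠ i → k ≠ j → g k = c) : ∑ k ∈ univ.erase i, g k = g j + (n - 2) * c := by
  have hj : j ∈ univ.erase i := mem_erase.mpr ⟨hji, mem_univ j⟩
  have hn : 2 ≤ n := by have := card_le_univ {i, j}; simp_all [card_pair (Ne.symm hji)]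
  rw [← add_sum_erase _ _ hj, sum_congr rfl fun k hk => h k (ne_of_mem_erase (mem_of_mem_erase hk))
    (ne_of_mem_erase hk), sum_const, card_erase_of_mem hj, card_erase_of_mem (mem_univ i),
    card_univ, Fintype.card_fin, nsmul_eq_mul, Nat.sub_sub, Nat.cast_sub hn]
  norm_num

section Mechanism

variable {f : Pref n → Pref n → Fin n → ℝ} (hn : 2 ≤ n) (hmech : IsMechanism (phiF f))
include hn hmech

lemma sum_sum_erase_transfer_eq_zero (p : Fin n → Pref n) (a : Fin n) :
    ∑ i, ∑ k ∈ univ.erase i, f (p i) (p k) a = 0 := by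
  have hcol := (hmech p).2.2 a
  have hn0 : (n : ℝ) ≠ 0 := by positivity
  simp only [phiF, sum_add_distrib, sum_const, card_univ, Fintype.card_fin, nsmul_eq_mul,
    mul_one_div_cancel hn0] at hcol
  linarith

lemma transfer_self (s : Pref n) (a : Fin n) : f s s a = 0 := by
  have h := sum_sum_erase_transfer_eq_zero hn hmech (fun _ => s) a
  rw [sum_congr rfl fun i _ => sum_erase_eq_mul fun _ _ => rfl, sum_const, card_univ,
    Fintype.card_fin, nsmul_eq_mul] at h
  have hn1 : (n : ℝ) * (n - 1) ≠ 0 := by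
    have : (2 : ℝ) ≤ n := by exact_mod_cast hn
    exact mul_ne_zero (by positivity) (by linarith)
  simpa [← mul_assoc, hn1] using h

lemma transfer_antisymm (s t : Pref n) (a : Fin n) : f s t a = -f t s a := by
  let i : Fin n := ⟨0, by omega⟩
  have h := sum_sum_erase_transfer_eq_zero hn hmech (fun k => if k = i then s else t) a
  rw [← add_sum_erase _ _ (mem_univ i), if_pos rfl,
    sum_erase_eq_mul (c := f s t a) fun k hk => by rw [if_neg hk],
    sum_erase_eq_mul (c := f t s a) fun k hk => by
      rw [if_neg hk, sum_erase_eq_add_mul (Ne.symm hk) (c := f t t a) fun l _ hl => by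
        rw [if_neg hl], if_pos rfl, transfer_self hn hmech]; ring] at h
  have : (1 : ℝ) ≤ n - 1 := by
    have : (2 : ℝ) ≤ n := by exact_mod_cast hn
    linarith
  nlinarith

lemma transferOn_self (W : Finset (Fin n)) (s : Pref n) : transferOn f W s s = 0 :=
  sum_eq_zero fun o _ => transfer_self hn hmech s o

lemma transferOn_antisymm (W : Finset (Fin n)) (s t : Pref n) :
    transferOn f W s t = -transferOn f W t s := by
  rw [transferOn, transferOn, ← sum_neg_distrib]
  exact sum_congr rfl fun o _ => transfer_antisymm hn hmech s t o

end Mechanism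

section StrategyProofToEnvyFree

variable {f : Pref n → Pref n → Fin n → ℝ} (hn : 2 ≤ n)
include hn

lemma transferOn_le_of_strategyProof (hSP : StrategyProof (phiF f)) {r : Pref n}
    {W : Finset (Fin n)} (hW : IsUpperContour r W) (s u : Pref n) :
    transferOn f W s u ≤ transferOn f W r u := by
  let i : Fin n := ⟨0, by omega⟩
  have h := (strategyProof_iff f).mp hSP (fun k => if k = i then r else u) i s W
    (by simpa using hW)
  rw [sum_erase_eq_mul (c := transferOn f W s u) fun k hk => by rw [if_neg hk],
    sum_erase_eq_mul (c := transferOn f W r u) fun k hk => by rw [if_neg hk, if_pos rfl]] at h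
  have : (0 : ℝ) < n - 1 := by
    have : (2 : ℝ) ≤ n := by exact_mod_cast hn
    linarith
  exact le_of_mul_le_mul_left h this

theorem envyFree_of_strategyProof (hmech : IsMechanism (phiF f))
    (hSP : StrategyProof (phiF f)) : EnvyFree (phiF f) := by
  rw [envyFree_iff]
  intro p i j W hW
  rcases eq_or_ne i j with rfl | hij
  · exact le_rfl
  have hle := transferOn_le_of_strategyProof hn hSP hW
  rw [← add_sum_erase _ _ (mem_erase.mpr ⟨hij.symm, mem_univ j⟩),
    ← add_sum_erase _ _ (mem_erase.mpr ⟨hij, mem_univ i⟩), erase_right_comm]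
  refine add_le_add ?_ (sum_le_sum fun k _ => hle _ _)
  have h := hle (p j) (p j)
  rw [transferOn_self hn hmech] at h
  rw [transferOn_antisymm hn hmech W (p j)]
  linarith

end StrategyProofToEnvyFree

section EnvyFreeToStrategyProof

variable {f : Pref n → Pref n → Fin n → ℝ}

lemma transferOn_add_mul_le_of_envyFree (hEF : EnvyFree (phiF f)) {i j : Fin n} (hij : i ≠ j)
    {a : Pref n} {W : Finset (Fin n)} (hW : IsUpperContour a W) (b u : Pref n) :
    transferOn f W b a + (n - 2) * transferOn f W b u
      ≤ transferOn f W a b + (n - 2) * transferOn f W a u := by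
  have h := (envyFree_iff f).mp hEF (fun k => if k = i then a else if k = j then b else u) i j W
    (by simpa using hW)
  simp only [hij.symm, if_true, if_false] at h
  rwa [sum_erase_eq_add_mul hij (c := transferOn f W b u) fun k hk hk' => by
      rw [if_neg hk', if_neg hk],
    sum_erase_eq_add_mul hij.symm (c := transferOn f W a u) fun k hk hk' => by
      rw [if_neg hk, if_neg hk'],
    if_neg hij.symm, if_pos rfl, if_pos rfl] at h

lemma transferOn_nonneg (hn : 2 ≤ n) (hmech : IsMechanism (phiF f)) (hEF : EnvyFree (phiF f))
    {a : Pref n} {W : Finset (Fin n)} (hW : IsUpperContour a W) (u : Pref n) :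
    0 ≤ transferOn f W a u := by
  have h₀₁ : (⟨0, by omega⟩ : Fin n) ≠ ⟨1, by omega⟩ := by simp
  have h := transferOn_add_mul_le_of_envyFree hEF h₀₁ hW u u
  rw [transferOn_self hn hmech, transferOn_antisymm hn hmech W u] at h
  have : (2 : ℝ) ≤ n := by exact_mod_cast hn
  nlinarith

lemma transferOn_eq_of_isUpperContour (hn : 3 ≤ n) (hmech : IsMechanism (phiF f))
    (hEF : EnvyFree (phiF f)) {a b : Pref n} {W : Finset (Fin n)} (ha : IsUpperContour a W)
    (hb : IsUpperContour b W) (u : Pref n) : transferOn f W a u = transferOn f W b u := by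
  have hn2 : 2 ≤ n := by omega
  have hab := transferOn_nonneg hn2 hmech hEF ha b
  have hba := transferOn_nonneg hn2 hmech hEF hb a
  rw [transferOn_antisymm hn2 hmech W b] at hba
  have h₀₁ : (⟨0, by omega⟩ : Fin n) ≠ ⟨1, by omega⟩ := by simp
  have h₁ := transferOn_add_mul_le_of_envyFree hEF h₀₁ ha b u
  have h₂ := transferOn_add_mul_le_of_envyFree hEF h₀₁ hb a u
  rw [transferOn_antisymm hn2 hmech W b a] at h₁ h₂
  have : (1 : ℝ) ≤ n - 2 := by
    have : (3 : ℝ) ≤ n := by exact_mod_cast hn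
    linarith
  nlinarith

variable (hn : 3 ≤ n) (hmech : IsMechanism (phiF f)) (hEF : EnvyFree (phiF f))
include hn hmech hEF

lemma transferOn_eq_baseline {r : Pref n} {W : Finset (Fin n)} (hr : IsUpperContour r W)
    (u : Pref n) : transferOn f W r u = baseline f W u :=
  transferOn_eq_of_isUpperContour hn hmech hEF hr (exists_isUpperContour W).choose_spec u

lemma baseline_nonneg (W : Finset (Fin n)) (u : Pref n) : 0 ≤ baseline f W u :=
  transferOn_nonneg (by omega) hmech hEF (exists_isUpperContour W).choose_spec u

lemma baseline_eq_zero {u : Pref n} {W : Finset (Fin n)} (hu : IsUpperContour u W) :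
    baseline f W u = 0 := by
  rw [← transferOn_eq_baseline hn hmech hEF hu, transferOn_self (by omega) hmech]

lemma transfer_eq_marginal (s u : Pref n) (x : Fin n) :
    f s u x = marginal f (strictUpperContour s x) x u := by
  rw [marginal, ← transferOn_eq_baseline hn hmech hEF (isUpperContour_strictUpperContour s x),
    ← transferOn_eq_baseline hn hmech hEF (isUpperContour_insert_strictUpperContour s x),
    transferOn, sum_insert (notMem_strictUpperContour s x), transferOn, add_sub_cancel_right]

lemma marginalDrop_eq {D : Finset (Fin n)} {x y : Fin n} (hx : x ∉ D) (hxy : x ≠ y)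
    (u : Pref n) : marginalDrop f D x y u =
      marginal f (strictUpperContour u x) x (blockPref D y ∅ x)
        - marginal f (strictUpperContour u x) x (blockPref D x ∅ y) := by
  have h₁ := transfer_eq_marginal hn hmech hEF (blockPref D x ∅ y) u x
  have h₂ := transfer_eq_marginal hn hmech hEF (blockPref D y ∅ x) u x
  rw [strictUpperContour_blockPref_left hx] at h₁
  rw [strictUpperContour_blockPref_right hx (notMem_empty x) hxy, union_empty] at h₂
  rw [marginalDrop, ← h₁, ← h₂, transfer_antisymm (by omega) hmech _ u,
    transfer_antisymm (by omega) hmech _ u, transfer_eq_marginal hn hmech hEF u,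
    transfer_eq_marginal hn hmech hEF u]
  ring

lemma marginalDrop_congr_left {D : Finset (Fin n)} {x y : Fin n} (hx : x ∉ D) (hxy : x ≠ y)
    {u v : Pref n} (h : strictUpperContour u x = strictUpperContour v x) :
    marginalDrop f D x y u = marginalDrop f D x y v := by
  rw [marginalDrop_eq hn hmech hEF hx hxy, marginalDrop_eq hn hmech hEF hx hxy, h]

lemma marginalDrop_congr_right {D : Finset (Fin n)} {x y : Fin n} (hy : y ∉ D) (hxy : x ≠ y)
    {u v : Pref n} (h : strictUpperContour u y = strictUpperContour v y) :
    marginalDrop f D x y u = marginalDrop f D x y v := by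
  rw [marginalDrop_comm, marginalDrop_congr_left hn hmech hEF hy hxy.symm h, marginalDrop_comm]

lemma marginalDrop_blockPref_nonneg {D : Finset (Fin n)} {x y : Fin n} (hx : x ∉ D)
    (hy : y ∉ D) (hxy : x ≠ y) : 0 ≤ marginalDrop f D x y (blockPref D x ∅ y) := by
  set q := blockPref D x ∅ y
  have hqx : strictUpperContour q x = D := strictUpperContour_blockPref_left hx ∅ y
  have hqy : strictUpperContour q y = insert x D := by
    rw [strictUpperContour_blockPref_right hy (notMem_empty y) hxy.symm, union_empty]
  have hD := isUpperContour_strictUpperContour q x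
  have hDx := isUpperContour_insert_strictUpperContour q x
  have hDxy := isUpperContour_insert_strictUpperContour q y
  rw [hqx] at hD hDx
  rw [hqy, insert_comm] at hDxy
  rw [marginalDrop, marginal, marginal, baseline_eq_zero hn hmech hEF hD,
    baseline_eq_zero hn hmech hEF hDx, baseline_eq_zero hn hmech hEF hDxy]
  simpa using baseline_nonneg hn hmech hEF (insert y D) q

lemma marginalDrop_nonneg {D : Finset (Fin n)} {x y : Fin n} (hx : x ∉ D) (hy : y ∉ D)
    (hxy : x ≠ y) (u : Pref n) : 0 ≤ marginalDrop f D x y u := by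
  wlog hlt : u x < u y generalizing x y
  · rw [marginalDrop_comm]
    exact this hy hx hxy.symm ((not_lt.mp hlt).lt_of_ne (u.injective.ne hxy.symm))
  set C := strictUpperContour u x
  have hxC : x ∉ C := notMem_strictUpperContour u x
  have hyC : y ∉ C := by simpa [C, strictUpperContour] using hlt.le
  calc 0 ≤ marginalDrop f D x y (blockPref D x ∅ y) :=
        marginalDrop_blockPref_nonneg hn hmech hEF hx hy hxy
    _ = marginalDrop f D x y (blockPref D x C y) := by
        apply marginalDrop_congr_left hn hmech hEF hx hxy
        rw [strictUpperContour_blockPref_left hx, strictUpperContour_blockPref_left hx]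
    _ = marginalDrop f D x y (blockPref C x D y) := by
        apply marginalDrop_congr_right hn hmech hEF hy hxy
        rw [strictUpperContour_blockPref_right hy hyC hxy.symm,
          strictUpperContour_blockPref_right hyC hy hxy.symm, union_comm]
    _ = marginalDrop f D x y u :=
        marginalDrop_congr_left hn hmech hEF hx hxy (strictUpperContour_blockPref_left hxC D y)

lemma marginal_le_of_subset {A B : Finset (Fin n)} (hBA : B ⊆ A) {x : Fin n} (hx : x ∉ A)
    (u : Pref n) : marginal f A x u ≤ marginal f B x u := by
  suffices h : ∀ C : Finset (Fin n), x ∉ B ∪ C → marginal f (B ∪ C) x u ≤ marginal f B x u by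
    simpa [union_eq_right.mpr hBA] using h A (by rwa [union_eq_right.mpr hBA])
  intro C
  induction C using Finset.induction_on with
  | empty => simp
  | insert y C _ ih =>
    intro hxC
    rw [union_insert] at hxC ⊢
    have hxC' : x ∉ B ∪ C := fun h => hxC (mem_insert_of_mem h)
    by_cases hyC : y ∈ B ∪ C
    · rw [insert_eq_of_mem hyC]
      exact ih hxC'
    · have hxy : x ≠ y := fun h => hxC (h ▸ mem_insert_self x _)
      have := marginalDrop_nonneg hn hmech hEF hxC' hyC hxy u
      rw [marginalDrop] at this
      linarith [ih hxC']

lemma transferOn_le_baseline (s u : Pref n) (V : Finset (Fin n)) :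
    transferOn f V s u ≤ baseline f V u := by
  induction V using Finset.induction_on_max_value (⇑s) with
  | empty => simp [transferOn, baseline_empty]
  | insert a W haW hmax ih =>
    have hW : W ⊆ strictUpperContour s a := fun o ho => by
      have hne : s o ≠ s a := s.injective.ne (ne_of_mem_of_not_mem ho haW)
      simpa [strictUpperContour] using (hmax o ho).lt_of_ne hne
    have hmarg := marginal_le_of_subset hn hmech hEF hW (notMem_strictUpperContour s a) u
    rw [transferOn, sum_insert haW, ← transferOn, transfer_eq_marginal hn hmech hEF]
    simp only [marginal] at hmarg ⊢
    linarith

theorem strategyProof_of_envyFree : StrategyProof (phiF f) := by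
  rw [strategyProof_iff]
  intro p i r W hW
  exact sum_le_sum fun k _ => (transferOn_le_baseline hn hmech hEF r (p k) W).trans
    (transferOn_eq_baseline hn hmech hEF hW (p k)).ge

end EnvyFreeToStrategyProof

end PairwiseExchange

theorem pairwise_exchange_sp_iff_ef_general (n : ℕ) (hn : 3 ≤ n)
    (f : Pref n → Pref n → Fin n → ℝ)
    (hmech : IsMechanism (phiF f)) :
    StrategyProof (phiF f) ↔ EnvyFree (phiF f) :=
  ⟨PairwiseExchange.envyFree_of_strategyProof (by omega) hmech,
    PairwiseExchange.strategyProof_of_envyFree hn hmech⟩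

/-- Within the class of pairwise exchange mechanisms, strategy-proofness is
equivalent to envy-freeness. -/
theorem pairwise_exchange_sp_iff_ef (n : ℕ) (hn : 3 ≤ n)
    (f : Pref n → Pref n → Fin n → ℝ) (hf : TransferBounded f)
    (hmech : IsMechanism (phiF f)) :
    StrategyProof (phiF f) ↔ EnvyFree (phiF f) :=
  pairwise_exchange_sp_iff_ef_general n hn f hmech
end

section
/- If a pairwise exchange mechanism φ^f is strategy-proof and neutral, then its transfer function f is neutral and receiver invariant. -/
open Finset

/-- Relabeling of a preference by a permutation `π` of objects: the rank of `π a`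
in `relabel π r` equals the rank of `a` in `r`. -/
def relabel {n : ℕ} (π : Equiv.Perm (Fin n)) (r : Pref n) : Pref n :=
  π.symm.trans r

/-- Neutrality of a mechanism: invariance under relabeling of the objects. -/
def Neutral {n : ℕ} (φ : (Fin n → Pref n) → Matrix (Fin n) (Fin n) ℝ) : Prop :=
  ∀ (prof : Fin n → Pref n) (π : Equiv.Perm (Fin n)) (i a : Fin n),
    φ (fun j => relabel π (prof j)) i (π a) = φ prof i a

/-- Neutrality of a transfer function. -/
def NeutralTransfer {n : ℕ} (f : Pref n → Pref n → Fin n → ℝ) : Prop :=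
  ∀ (r r' : Pref n) (a : Fin n) (π : Equiv.Perm (Fin n)),
    f r r' a = f (relabel π r) (relabel π r') (π a)

/-- Receiver invariance of a transfer function. -/
def ReceiverInvariant {n : ℕ} (f : Pref n → Pref n → Fin n → ℝ) : Prop :=
  ∀ (r r' r'' : Pref n) (t : Fin n),
    ((∀ k, k ≤ t → r' (r.symm k) = r'' (r.symm k)) →
      f r r' (r.symm t) = f r r'' (r.symm t)) ∧
    ((∀ k, t ≤ k → r' (r.symm k) = r'' (r.symm k)) →
      f r r' (r.symm t) = f r r'' (r.symm t))


namespace SPAux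

variable {n : ℕ}

def prof2 (i0 : Fin n) (ρ σ : Pref n) : Fin n → Pref n :=
  fun j => if j = i0 then ρ else σ

lemma prof2_i0 (i0 : Fin n) (ρ σ : Pref n) : prof2 i0 ρ σ i0 = ρ := if_pos rfl

lemma prof2_ne (i0 : Fin n) (ρ σ : Pref n) {j : Fin n} (h : j ≠ i0) : prof2 i0 ρ σ j = σ :=
  if_neg h

lemma card_erase (i0 : Fin n) : (Finset.univ.erase i0).card = n - 1 := by
  rw [Finset.card_erase_of_mem (mem_univ _), card_univ, Fintype.card_fin]

lemma phiF_prof2 (f : Pref n → Pref n → Fin n → ℝ) (i0 : Fin n) (ρ σ : Pref n) (a : Fin n) :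
    phiF f (prof2 i0 ρ σ) i0 a = 1 / n + ((n - 1 : ℕ) : ℝ) * f ρ σ a := by
  unfold phiF
  rw [Finset.sum_congr rfl (fun j hj => by
      rw [prof2_i0, prof2_ne i0 ρ σ (Finset.ne_of_mem_erase hj)]),
    Finset.sum_const, card_erase, nsmul_eq_mul]

lemma update_prof2 (i0 : Fin n) (ρ ρ₁ σ : Pref n) :
    Function.update (prof2 i0 ρ σ) i0 ρ₁ = prof2 i0 ρ₁ σ := by
  funext j
  by_cases hj : j = i0
  · subst hj; simp [prof2]
  · simp [Function.update, hj, prof2]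

lemma colsum (hn : 3 ≤ n) (f : Pref n → Pref n → Fin n → ℝ)
    (hmech : IsMechanism (phiF f)) (ρ σ : Pref n) (a : Fin n) :
    ((n - 1 : ℕ) : ℝ) * f ρ σ a
      + ((n - 1 : ℕ) : ℝ) * (f σ ρ a + ((n - 2 : ℕ) : ℝ) * f σ σ a) = 0 := by
  set i0 : Fin n := ⟨0, by omega⟩ with hi0def
  have hcol := (hmech (prof2 i0 ρ σ)).2.2 a
  unfold phiF at hcol
  rw [Finset.sum_add_distrib, Finset.sum_const, card_univ, Fintype.card_fin,
    nsmul_eq_mul] at hcol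
  have hne : (n : ℝ) ≠ 0 := Nat.cast_ne_zero.mpr (by omega)
  have h1 : (n : ℝ) * (1 / n) = 1 := by field_simp
  rw [h1] at hcol
  have hsum : ∑ i, ∑ j ∈ univ.erase i, f (prof2 i0 ρ σ i) (prof2 i0 ρ σ j) a = 0 := by
    linarith
  rw [← Finset.add_sum_erase _ _ (mem_univ i0)] at hsum
  have t0 : ∑ j ∈ univ.erase i0, f (prof2 i0 ρ σ i0) (prof2 i0 ρ σ j) a
      = ((n - 1 : ℕ) : ℝ) * f ρ σ a := by
    rw [Finset.sum_congr rfl (fun j hj => by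
        rw [prof2_i0, prof2_ne i0 ρ σ (Finset.ne_of_mem_erase hj)]),
      Finset.sum_const, card_erase, nsmul_eq_mul]
  have t1 : ∀ i ∈ univ.erase i0,
      (∑ j ∈ univ.erase i, f (prof2 i0 ρ σ i) (prof2 i0 ρ σ j) a)
        = f σ ρ a + ((n - 2 : ℕ) : ℝ) * f σ σ a := by
    intro i hi
    have hi0 : i ≠ i0 := Finset.ne_of_mem_erase hi
    have hmem : i0 ∈ univ.erase i := Finset.mem_erase.mpr ⟨fun h => hi0 h.symm, mem_univ _⟩
    have hcard : ((univ.erase i).erase i0).card = n - 2 := by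
      rw [Finset.card_erase_of_mem hmem, card_erase]; omega
    rw [prof2_ne i0 ρ σ hi0, ← Finset.add_sum_erase _ _ hmem, prof2_i0]
    congr 1
    rw [Finset.sum_congr rfl (fun j hj => by
        rw [prof2_ne i0 ρ σ (Finset.ne_of_mem_erase hj)]),
      Finset.sum_const, hcard, nsmul_eq_mul]
  rw [Finset.sum_congr rfl t1, Finset.sum_const, card_erase, nsmul_eq_mul, t0] at hsum
  linarith

lemma f_diag (hn : 3 ≤ n) (f : Pref n → Pref n → Fin n → ℝ)
    (hmech : IsMechanism (phiF f)) (σ : Pref n) (a : Fin n) : f σ σ a = 0 := by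
  have h := colsum hn f hmech σ σ a
  have hc : (0 : ℝ) < ((n - 1 : ℕ) : ℝ) := by
    exact_mod_cast Nat.pos_of_ne_zero (by omega)
  have hd : (0 : ℝ) ≤ ((n - 2 : ℕ) : ℝ) := Nat.cast_nonneg _
  have h2 : (((n - 1 : ℕ) : ℝ) * (2 + ((n - 2 : ℕ) : ℝ))) * f σ σ a = 0 := by
    linear_combination h
  rcases mul_eq_zero.mp h2 with h3 | h3
  · exact absurd h3 (by nlinarith)
  · exact h3

lemma f_antisym (hn : 3 ≤ n) (f : Pref n → Pref n → Fin n → ℝ)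
    (hmech : IsMechanism (phiF f)) (ρ σ : Pref n) (a : Fin n) :
    f σ ρ a = - f ρ σ a := by
  have h := colsum hn f hmech ρ σ a
  have hz := f_diag hn f hmech σ a
  have hc : ((n - 1 : ℕ) : ℝ) ≠ 0 := by
    exact_mod_cast Nat.pos_of_ne_zero (n := n - 1) (by omega) |>.ne'
  have h2 : ((n - 1 : ℕ) : ℝ) * (f ρ σ a + f σ ρ a) = 0 := by
    linear_combination h - ((n - 1 : ℕ) : ℝ) * ((n - 2 : ℕ) : ℝ) * hz
  rcases mul_eq_zero.mp h2 with h3 | h3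
  · exact absurd h3 hc
  · linarith

lemma sp_sum (hn : 3 ≤ n) (f : Pref n → Pref n → Fin n → ℝ)
    (hsp : StrategyProof (phiF f)) (ρ ρ₁ σ : Pref n) (a : Fin n) :
    ∑ o ∈ Finset.univ.filter (fun o => ρ o ≤ ρ a), f ρ₁ σ o
      ≤ ∑ o ∈ Finset.univ.filter (fun o => ρ o ≤ ρ a), f ρ σ o := by
  set i0 : Fin n := ⟨0, by omega⟩ with hi0def
  have h := hsp (prof2 i0 ρ σ) i0 ρ₁ a
  rw [update_prof2, prof2_i0] at h
  unfold upperSum at h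
  simp only [phiF_prof2] at h
  rw [Finset.sum_add_distrib, Finset.sum_add_distrib, ← Finset.mul_sum, ← Finset.mul_sum] at h
  have hc : (0 : ℝ) < ((n - 1 : ℕ) : ℝ) := by
    exact_mod_cast Nat.pos_of_ne_zero (by omega)
  exact le_of_mul_le_mul_left (le_of_add_le_add_left h) hc

lemma f_I1 (hn : 3 ≤ n) (f : Pref n → Pref n → Fin n → ℝ)
    (hsp : StrategyProof (phiF f)) (ρ ρ₁ σ : Pref n) (a : Fin n)
    (h : ∀ o, ρ o < ρ a ↔ ρ₁ o < ρ₁ a) : f ρ σ a = f ρ₁ σ a := by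
  set U : Finset (Fin n) := univ.filter (fun o => ρ o < ρ a) with hU
  have hU1 : U = univ.filter (fun o => ρ₁ o < ρ₁ a) := by
    ext o; simp [hU, h o]
  have haU : a ∉ U := by simp [hU]
  have hV : univ.filter (fun o => ρ o ≤ ρ a) = insert a U := by
    ext o
    simp only [hU, mem_filter, mem_univ, true_and, Finset.mem_insert]
    constructor
    · intro ho
      rcases lt_or_eq_of_le ho with h' | h'
      · exact Or.inr h'
      · exact Or.inl (ρ.injective h')
    · rintro (rfl | h')
      · exact le_rfl
      · exact le_of_lt h'
  have hV1 : univ.filter (fun o => ρ₁ o ≤ ρ₁ a) = insert a U := by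
    ext o
    simp only [hU1, mem_filter, mem_univ, true_and, Finset.mem_insert]
    constructor
    · intro ho
      rcases lt_or_eq_of_le ho with h' | h'
      · exact Or.inr h'
      · exact Or.inl (ρ₁.injective h')
    · rintro (rfl | h')
      · exact le_rfl
      · exact le_of_lt h'
  have hVeq : ∑ o ∈ insert a U, f ρ σ o = ∑ o ∈ insert a U, f ρ₁ σ o := by
    have h1 := sp_sum hn f hsp ρ ρ₁ σ a
    have h2 := sp_sum hn f hsp ρ₁ ρ σ a
    rw [hV] at h1
    rw [hV1] at h2
    linarith
  have hUeq : ∑ o ∈ U, f ρ σ o = ∑ o ∈ U, f ρ₁ σ o := by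
    by_cases h0 : U = ∅
    · rw [h0]; simp
    · obtain ⟨w, hw⟩ := Finset.nonempty_of_ne_empty h0
      have hw1 : ρ w < ρ a := by
        rw [hU] at hw; exact (mem_filter.mp hw).2
      have hw2 : ρ₁ w < ρ₁ a := (h w).mp hw1
      have hm : 0 < (ρ a : ℕ) := lt_of_le_of_lt (Nat.zero_le _) hw1
      have hm1 : 0 < (ρ₁ a : ℕ) := lt_of_le_of_lt (Nat.zero_le _) hw2
      set b : Fin n := ρ.symm ⟨(ρ a : ℕ) - 1, by omega⟩ with hb
      set b₁ : Fin n := ρ₁.symm ⟨(ρ₁ a : ℕ) - 1, by omega⟩ with hb₁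
      have hUb : univ.filter (fun o => ρ o ≤ ρ b) = U := by
        ext o
        simp only [hU, mem_filter, mem_univ, true_and, hb, Equiv.apply_symm_apply]
        rw [Fin.le_def, Fin.lt_def]
        simp only []
        omega
      have hUb₁ : univ.filter (fun o => ρ₁ o ≤ ρ₁ b₁) = U := by
        ext o
        simp only [hU1, mem_filter, mem_univ, true_and, hb₁, Equiv.apply_symm_apply]
        rw [Fin.le_def, Fin.lt_def]
        simp only []
        omega
      have h1 := sp_sum hn f hsp ρ ρ₁ σ b
      have h2 := sp_sum hn f hsp ρ₁ ρ σ b₁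
      rw [hUb] at h1
      rw [hUb₁] at h2
      linarith
  have s1 := Finset.sum_insert (f := fun o => f ρ σ o) haU
  have s2 := Finset.sum_insert (f := fun o => f ρ₁ σ o) haU
  rw [s1, s2] at hVeq
  linarith

lemma f_neutral (hn : 3 ≤ n) (f : Pref n → Pref n → Fin n → ℝ)
    (hneutral : Neutral (phiF f)) : NeutralTransfer f := by
  intro r r' a π
  set i0 : Fin n := ⟨0, by omega⟩ with hi0def
  have h := hneutral (prof2 i0 r r') π i0 a
  have hp : (fun j => relabel π (prof2 i0 r r' j)) = prof2 i0 (relabel π r) (relabel π r') := by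
    funext j
    by_cases hj : j = i0 <;> simp [prof2, hj]
  rw [hp, phiF_prof2, phiF_prof2] at h
  have hc : ((n - 1 : ℕ) : ℝ) ≠ 0 := by
    exact_mod_cast Nat.pos_of_ne_zero (n := n - 1) (by omega) |>.ne'
  exact (mul_left_cancel₀ hc (by linarith)).symm

lemma f_reduce (hn : 3 ≤ n) (f : Pref n → Pref n → Fin n → ℝ)
    (hneutral : Neutral (phiF f)) (r r' : Pref n) (a : Fin n) :
    f r r' a = f (Equiv.refl (Fin n)) (r.symm.trans r') (r a) := by
  have h := f_neutral hn f hneutral r r' a r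
  have h1 : relabel r r = Equiv.refl (Fin n) := by
    apply Equiv.ext; intro x; simp [relabel]
  have h2 : relabel r r' = r.symm.trans r' := rfl
  rw [h1, h2] at h
  exact h

lemma key (hn : 3 ≤ n) (f : Pref n → Pref n → Fin n → ℝ)
    (hmech : IsMechanism (phiF f)) (hsp : StrategyProof (phiF f))
    (hneutral : Neutral (phiF f)) (s s₁ : Pref n) (t : Fin n)
    (hst : s t = s₁ t) (hiff : ∀ o : Fin n, s.symm o < t ↔ s₁.symm o < t) :
    f (Equiv.refl (Fin n)) s t = f (Equiv.refl (Fin n)) s₁ t := by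
  have e : ∀ u : Pref n, f (Equiv.refl (Fin n)) u t = f u.symm (Equiv.refl (Fin n)) (u t) := by
    intro u
    have a1 : f (Equiv.refl (Fin n)) u t = - f u (Equiv.refl (Fin n)) t :=
      f_antisym hn f hmech u (Equiv.refl (Fin n)) t
    have a2 : f u (Equiv.refl (Fin n)) t = f (Equiv.refl (Fin n)) u.symm (u t) := by
      have h := f_reduce hn f hneutral u (Equiv.refl (Fin n)) t
      rwa [Equiv.trans_refl] at h
    have a3 : f (Equiv.refl (Fin n)) u.symm (u t) = - f u.symm (Equiv.refl (Fin n)) (u t) :=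
      f_antisym hn f hmech u.symm (Equiv.refl (Fin n)) (u t)
    rw [a1, a2, a3, neg_neg]
  rw [e s, e s₁, ← hst]
  refine f_I1 hn f hsp s.symm s₁.symm (Equiv.refl (Fin n)) (s t) ?_
  intro o
  rw [Equiv.symm_apply_apply, show s₁.symm (s t) = t from by rw [hst, Equiv.symm_apply_apply]]
  exact hiff o

end SPAux

/-- If a pairwise exchange mechanism is strategy-proof and neutral, then its
transfer function is neutral and receiver invariant. -/

theorem sp_neutral_implies_neutral_receiver_invariant (n : ℕ) (hn : 3 ≤ n)
    (f : Pref n → Pref n → Fin n → ℝ) (hf : TransferBounded f)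
    (hmech : IsMechanism (phiF f)) (hsp : StrategyProof (phiF f))
    (hneutral : Neutral (phiF f)) :
    NeutralTransfer f ∧ ReceiverInvariant f := by
  refine ⟨SPAux.f_neutral hn f hneutral, ?_⟩
  intro r r' r'' t
  have hred : ∀ r' : Pref n, f r r' (r.symm t) = f (Equiv.refl (Fin n)) (r.symm.trans r') t := by
    intro r'
    have h := SPAux.f_reduce hn f hneutral r r' (r.symm t)
    rwa [Equiv.apply_symm_apply] at h
  set s : Pref n := r.symm.trans r' with hs
  set s₁ : Pref n := r.symm.trans r'' with hs₁
  have hsk : ∀ k : Fin n, s k = r' (r.symm k) := fun k => rfl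
  have hs₁k : ∀ k : Fin n, s₁ k = r'' (r.symm k) := fun k => rfl
  constructor
  · intro hA
    rw [hred r', hred r'']
    refine SPAux.key hn f hmech hsp hneutral s s₁ t ?_ ?_
    · rw [hsk, hs₁k]; exact hA t le_rfl
    · intro o
      constructor
      · intro h
        have h1 : s₁ (s.symm o) = o := by
          rw [hs₁k, ← hA (s.symm o) (le_of_lt h), ← hsk]
          exact s.apply_symm_apply o
        have h2 : s₁.symm o = s.symm o := ((Equiv.eq_symm_apply _).mpr h1).symm
        rw [h2]; exact h
      · intro h
        have h1 : s (s₁.symm o) = o := by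
          rw [hsk, hA (s₁.symm o) (le_of_lt h), ← hs₁k]
          exact s₁.apply_symm_apply o
        have h2 : s.symm o = s₁.symm o := ((Equiv.eq_symm_apply _).mpr h1).symm
        rw [h2]; exact h
  · intro hB
    rw [hred r', hred r'']
    refine SPAux.key hn f hmech hsp hneutral s s₁ t ?_ ?_
    · rw [hsk, hs₁k]; exact hB t le_rfl
    · intro o
      constructor
      · intro h
        by_contra hc
        push_neg at hc
        have h1 : s (s₁.symm o) = o := by
          rw [hsk, hB (s₁.symm o) hc, ← hs₁k]
          exact s₁.apply_symm_apply o
        have h2 : s.symm o = s₁.symm o := ((Equiv.eq_symm_apply _).mpr h1).symm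
        rw [h2] at h
        exact absurd h (not_lt.mpr hc)
      · intro h
        by_contra hc
        push_neg at hc
        have h1 : s₁ (s.symm o) = o := by
          rw [hs₁k, ← hB (s.symm o) hc, ← hsk]
          exact s.apply_symm_apply o
        have h2 : s₁.symm o = s.symm o := ((Equiv.eq_symm_apply _).mpr h1).symm
        rw [h2] at h
        exact absurd h (not_lt.mpr hc)
end

section
/- Let n ≥ 3 and let f : R × R × O → [−1/n, 1/n] be a function that is neutral, sender invariant, receiver invariant, and such that there is a constant c ∈ ℝ with Σ_{a ∈ O} f(≻, ≻', a) = c for all preferences ≻, ≻' ∈ R. Then for every object a ∈ O and all preferences ≻, ≻', ≻'' ∈ R: rank(≻',a) = rank(≻'',a) implies f(≻, ≻', a) = f(≻, ≻'', a). -/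
open Finset

/-!
Fix the receiver's preference `r` and an object `a`. Any two senders `q₁`, `q₂` that give `a`
the same rank and the same number `commonAbove r q a` of objects ranked above `a` by both `r` and
`q` are linked by a permutation preserving the `r`-upper set of `a` (receiver invariance)
followed by a prefix/suffix splice (sender invariance). Hence `f r q a` is a function
`φₐ (q a, commonAbove r q a)`.

Let `b` be the `r`-predecessor of `a`. Exchanging `a` and `b` in the sender's order changes the
transfers of `a` and `b` only, and the total transfer is constant, so every such exchange gives a
linear relation between values of `φₐ` and `φ_b`. The three relations coming from senders that
put `(b, a)` at ranks `(m, t)`, `(m, t + 1)` and `(t, t + 1)` eliminate `φ_b` and give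
`φₐ (t, m + 1) = φₐ (t, m)`; induction on `m` over its feasible range finishes the proof.
-/

theorem exists_equiv_piecewise {α β : Type*} [Finite β] (e₁ e₂ : α ≃ β) (p : α → Prop)
    [DecidablePred p] (h : ∀ x y, p x → ¬p y → e₁ x ≠ e₂ y) :
    ∃ e : α ≃ β, (∀ x, p x → e x = e₁ x) ∧ ∀ x, ¬p x → e x = e₂ x := by
  have hinj : Function.Injective fun x => if p x then e₁ x else e₂ x := by
    intro x y hxy
    by_cases hx : p x <;> by_cases hy : p y <;> simp only [hx, hy, if_true, if_false] at hxy
    · exact e₁.injective hxy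
    · exact absurd hxy (h x y hx hy)
    · exact absurd hxy.symm (h y x hy hx)
    · exact e₂.injective hxy
  have : Finite α := .of_equiv β e₁.symm
  refine ⟨.ofBijective _ (hinj.bijective_of_nat_card_le (Nat.card_congr e₁).ge), ?_, ?_⟩ <;>
    intro x hx <;> simp [hx]

theorem exists_equiv_of_card_filter_eq {α β γ : Type*} [Fintype α] [Fintype β]
    [DecidableEq γ] (f : α → γ) (g : β → γ) (h : ∀ c, #{x | f x = c} = #{y | g y = c}) :
    ∃ e : α ≃ β, ∀ x, g (e x) = f x :=
  ⟨.ofFiberEquiv fun c => Fintype.equivOfCardEq (by simpa [Fintype.card_subtype] using h c),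
    Equiv.ofFiberEquiv_map _⟩

theorem exists_perm_of_card_filter_and_eq {α ι : Type*} [Fintype α] [DecidableEq ι]
    (κ : α → ι) (P Q : α → Prop) [DecidablePred P] [DecidablePred Q]
    (h : ∀ i, #{x | κ x = i ∧ P x} = #{x | κ x = i ∧ Q x}) :
    ∃ π : Equiv.Perm α, ∀ x, κ (π x) = κ x ∧ (P (π x) ↔ Q x) := by
  have hcompl : ∀ (R : α → Prop) [DecidablePred R] i,
      #{x | κ x = i ∧ ¬R x} = #{x | κ x = i} - #{x | κ x = i ∧ R x} := by
    intro R _ i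
    simp only [← filter_filter]
    rw [← card_filter_add_card_filter_not (s := filter (κ · = i) univ) R]
    omega
  obtain ⟨π, hπ⟩ := exists_equiv_of_card_filter_eq
    (fun x => (κ x, decide (Q x))) (fun x => (κ x, decide (P x))) <| by
      rintro ⟨i, _ | _⟩
      · simpa [hcompl] using congrArg (#{x | κ x = i} - ·) (h i).symm
      · simpa using (h i).symm
  exact ⟨π, fun x => by simpa using hπ x⟩

theorem card_filter_val_apply_lt {α : Type*} [Fintype α] {n : ℕ} (e : α ≃ Fin n) (k : ℕ) :
    #{x | (e x : ℕ) < k} = min n k :=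
  (card_equiv e (by simp)).trans Fin.card_filter_val_lt

theorem add_eq_add_of_sum_eq {α M : Type*} [Fintype α] [DecidableEq α] [AddCancelCommMonoid M]
    {g h : α → M} {b c : α} (hbc : b ≠ c) (hsum : ∑ x, g x = ∑ x, h x)
    (hrest : ∀ x, x ≠ b → x ≠ c → g x = h x) : g b + g c = h b + h c := by
  have hg := sum_sdiff (f := g) (subset_univ {b, c})
  have hh := sum_sdiff (f := h) (subset_univ {b, c})
  rw [sum_congr rfl fun x hx => hrest x (by simp_all) (by simp_all), sum_pair hbc] at hg
  rw [sum_pair hbc] at hh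
  exact add_left_cancel (hg.trans (hsum.trans hh.symm))

section Layout

/- Sender ranks, indexed by the receiver rank `v` of an object, for `b` at receiver rank `ρ` and
`a` at `ρ + 1`: the top `m` objects keep their ranks, `b` goes to rank `β`, `a` to rank `γ`, the
other objects above `b` come right after `a`, and the objects below `a` fill the remaining ranks
in order. -/
def pairLayout (ρ β γ m v : ℕ) : ℕ :=
  if v < m then v
  else if v < ρ then γ + 1 + (v - m)
  else if v = ρ then β
  else if v = ρ + 1 then γ
  else if v + m < ρ + 1 + γ then
    if v + m < ρ + 2 + β then v + m - (ρ + 2) else v + m - (ρ + 1)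
  else v

variable {n ρ β γ m : ℕ}

theorem pairLayout_injective (hmβ : m ≤ β) (hβγ : β < γ) (hmρ : m ≤ ρ) :
    Function.Injective (pairLayout ρ β γ m) := by
  intro v w h
  unfold pairLayout at h
  split_ifs at h <;> omega

theorem pairLayout_lt (hβγ : β < γ) (hmρ : m ≤ ρ) (hγ : γ + ρ < n + m) {v : ℕ} (hv : v < n) :
    pairLayout ρ β γ m v < n := by
  unfold pairLayout
  split_ifs <;> omega

theorem pairLayout_lt_iff {v c : ℕ} (hv : v < ρ) (hmc : m ≤ c) (hcγ : c ≤ γ) :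
    pairLayout ρ β γ m v < c ↔ v < m := by
  unfold pairLayout
  split_ifs <;> omega

theorem exists_perm_val_eq_pairLayout (hmβ : m ≤ β) (hβγ : β < γ) (hmρ : m ≤ ρ)
    (hγ : γ + ρ < n + m) : ∃ w : Equiv.Perm (Fin n), ∀ v, (w v : ℕ) = pairLayout ρ β γ m v := by
  let g (v : Fin n) : Fin n := ⟨pairLayout ρ β γ m v, pairLayout_lt hβγ hmρ hγ v.isLt⟩
  have hg : Function.Injective g := fun v w h =>
    Fin.ext (pairLayout_injective hmβ hβγ hmρ (congrArg Fin.val h))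
  exact ⟨.ofBijective g (Finite.injective_iff_bijective.1 hg), fun _ => rfl⟩

end Layout

section

variable {n : ℕ} {f : Pref n → Pref n → Fin n → ℝ}

def commonAbove (r q : Pref n) (a : Fin n) : ℕ :=
  #{y | r y < r a ∧ q y < q a}

theorem card_filter_apply_lt (q : Pref n) (a : Fin n) : #{y | q y < q a} = q a := by
  simp only [Fin.lt_def, card_filter_val_apply_lt, min_eq_right (q a).isLt.le]

theorem commonAbove_le_left (r q : Pref n) (a : Fin n) : commonAbove r q a ≤ r a :=
  card_filter_apply_lt r a ▸ card_le_card fun y => by simp +contextual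

theorem commonAbove_le_right (r q : Pref n) (a : Fin n) : commonAbove r q a ≤ q a :=
  card_filter_apply_lt q a ▸ card_le_card fun y => by simp +contextual

theorem add_le_commonAbove (r q : Pref n) (a : Fin n) :
    (r a : ℕ) + q a ≤ n - 1 + commonAbove r q a := by
  have hunion : #(univ.filter (r · < r a) ∪ univ.filter (q · < q a)) ≤ n - 1 := by
    simpa using card_le_card (t := univ.erase a) fun y => by
      simp only [mem_union, mem_filter, mem_univ, true_and, mem_erase, and_true]
      rintro (h | h) rfl <;> exact lt_irrefl _ h
  rw [← card_filter_apply_lt r a, ← card_filter_apply_lt q a, ← card_union_add_card_inter,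
    ← filter_and]
  exact Nat.add_le_add_right hunion _

theorem SenderInvariant.eq_of_upper_eq (hsend : SenderInvariant f) {r q₁ q₂ : Pref n}
    {a : Fin n} (ha : q₁ a = q₂ a) (hup : ∀ y, q₁ y < q₁ a ↔ q₂ y < q₂ a) :
    f r q₁ a = f r q₂ a := by
  obtain ⟨e, he₁, he₂⟩ := exists_equiv_piecewise q₁.symm q₂.symm (· ≤ q₁ a) <| by
    intro k l hk hl hkl
    have hl' : q₂ (q₁.symm k) = l := by rw [hkl, Equiv.apply_symm_apply]
    obtain hk | rfl := hk.lt_or_eq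
    · have := (hup (q₁.symm k)).1 (by rwa [Equiv.apply_symm_apply])
      rw [hl', ← ha] at this
      exact hl this.le
    · rw [Equiv.symm_apply_apply] at hl'
      exact hl (by rw [← hl', ha])
  have h₁ := (hsend r q₁ e.symm (q₁ a)).1 fun k hk => by
    rw [Equiv.symm_symm, he₁ k hk]
  have h₂ := (hsend r e.symm q₂ (q₁ a)).2 fun k hk => by
    rw [Equiv.symm_symm]
    obtain rfl | hk := hk.eq_or_lt
    · rw [he₁ _ le_rfl, Equiv.symm_apply_apply, ha, Equiv.symm_apply_apply]
    · exact he₂ k hk.not_ge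
  rw [Equiv.symm_symm, he₁ _ le_rfl, Equiv.symm_apply_apply] at h₂
  rw [Equiv.symm_apply_apply] at h₁
  exact h₁.trans h₂

theorem ReceiverInvariant.apply_perm_trans (hrecv : ReceiverInvariant f) {r : Pref n}
    (q : Pref n) {a : Fin n} (π : Equiv.Perm (Fin n)) (hπa : π a = a)
    (hπ : ∀ y, r (π y) < r a ↔ r y < r a) : f r (π.trans q) a = f r q a := by
  obtain ⟨e, he₁, he₂⟩ := exists_equiv_piecewise q (π.trans q) (fun y => r y ≤ r a) <| by
    intro x y hx hy hxy
    obtain rfl : x = π y := q.injective hxy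
    obtain hx | hx := hx.lt_or_eq
    · exact hy ((hπ y).1 hx).le
    · obtain rfl : y = a := π.injective ((r.injective hx).trans hπa.symm)
      exact hy le_rfl
  have h₁ := (hrecv r q e (r a)).1 fun k hk =>
    (he₁ _ (by rwa [Equiv.apply_symm_apply])).symm
  have h₂ := (hrecv r e (π.trans q) (r a)).2 fun k hk => by
    obtain rfl | hk := hk.eq_or_lt
    · rw [Equiv.symm_apply_apply, he₁ _ le_rfl, Equiv.trans_apply, hπa]
    · exact he₂ _ (by rw [Equiv.apply_symm_apply]; exact hk.not_ge)
  rw [Equiv.symm_apply_apply] at h₁ h₂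
  exact (h₁.trans h₂).symm

theorem card_filter_compare_gt_add_commonAbove (r q : Pref n) (a : Fin n) :
    #{y | compare (r y) (r a) = .gt ∧ q y < q a} + commonAbove r q a = q a := by
  rw [← card_filter_apply_lt q a, commonAbove, ← card_union_of_disjoint]
  · congr 1
    ext y
    simp only [mem_union, mem_filter, mem_univ, true_and, compare_gt_iff_gt]
    refine ⟨by tauto, fun h => ?_⟩
    have : r y ≠ r a := fun hy => (r.injective hy ▸ h).false
    rcases this.lt_or_gt with hlt | hgt <;> tauto
  · exact disjoint_filter.2 fun y _ h₁ h₂ => (lt_asymm h₂.1 (compare_gt_iff_gt.1 h₁.1))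

theorem card_filter_compare_and_lt_congr {r q₁ q₂ : Pref n} {a : Fin n} (ha : q₁ a = q₂ a)
    (hc : commonAbove r q₁ a = commonAbove r q₂ a) (o : Ordering) :
    #{y | compare (r y) (r a) = o ∧ q₁ y < q₁ a} =
      #{y | compare (r y) (r a) = o ∧ q₂ y < q₂ a} := by
  cases o
  · simp only [compare_lt_iff_lt]
    exact hc
  · have hempty : ∀ q : Pref n, #{y | compare (r y) (r a) = .eq ∧ q y < q a} = 0 := fun q => by
      simp +contextual
    rw [hempty, hempty]
  · have h₁ := card_filter_compare_gt_add_commonAbove r q₁ a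
    have h₂ := card_filter_compare_gt_add_commonAbove r q₂ a
    have := congrArg Fin.val ha
    omega

theorem apply_eq_of_commonAbove_eq (hsend : SenderInvariant f) (hrecv : ReceiverInvariant f)
    {r q₁ q₂ : Pref n} {a : Fin n} (ha : q₁ a = q₂ a)
    (hc : commonAbove r q₁ a = commonAbove r q₂ a) : f r q₁ a = f r q₂ a := by
  -- Classifying objects by `compare` puts `a` alone in its class, so `π` fixes `a`.
  obtain ⟨π, hπ⟩ := exists_perm_of_card_filter_and_eq (fun y => compare (r y) (r a))
    (fun y => q₁ y < q₁ a) (fun y => q₂ y < q₂ a) (card_filter_compare_and_lt_congr ha hc)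
  have hπa : π a = a := r.injective (compare_eq_iff_eq.1 ((hπ a).1.trans (compare_eq_iff_eq.2 rfl)))
  calc f r q₁ a = f r (π.trans q₁) a := by
        refine (hrecv.apply_perm_trans q₁ π hπa fun y => ?_).symm
        rw [← compare_lt_iff_lt, (hπ y).1, compare_lt_iff_lt]
    _ = f r q₂ a := by
        refine hsend.eq_of_upper_eq (by rw [Equiv.trans_apply, hπa, ha]) fun y => ?_
        simpa only [Equiv.trans_apply, hπa] using (hπ y).2

section Adjacent

variable {r : Pref n} {a b : Fin n}

theorem apply_lt_iff_of_adjacent (hab : (r a : ℕ) = r b + 1) (y : Fin n) :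
    r y < r a ↔ r y < r b ∨ y = b := by
  rw [← r.injective.eq_iff, Fin.lt_def, Fin.lt_def, Fin.ext_iff]
  omega

theorem swap_apply_lt_iff_of_adjacent (hab : (r a : ℕ) = r b + 1) {x : Fin n} (hxb : x ≠ b)
    (hxa : x ≠ a) (y : Fin n) : r (Equiv.swap b a y) < r x ↔ r y < r x := by
  have hb : (r x : ℕ) ≠ r b := fun h => hxb (r.injective (Fin.ext h))
  have ha : (r x : ℕ) ≠ r a := fun h => hxa (r.injective (Fin.ext h))
  rcases eq_or_ne y b with rfl | hyb
  · simp only [Equiv.swap_apply_left, Fin.lt_def]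
    omega
  rcases eq_or_ne y a with rfl | hya
  · simp only [Equiv.swap_apply_right, Fin.lt_def]
    omega
  rw [Equiv.swap_apply_of_ne_of_ne hyb hya]

theorem apply_swap_trans_add (hrecv : ReceiverInvariant f) {c : ℝ}
    (hc : ∀ r r' : Pref n, ∑ a, f r r' a = c) (hab : (r a : ℕ) = r b + 1) (q : Pref n) :
    f r ((Equiv.swap b a).trans q) b + f r ((Equiv.swap b a).trans q) a = f r q b + f r q a := by
  refine add_eq_add_of_sum_eq (fun h => by simp [h] at hab) (by rw [hc, hc]) fun x hxb hxa => ?_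
  exact hrecv.apply_perm_trans q _ (Equiv.swap_apply_of_ne_of_ne hxb hxa)
    (swap_apply_lt_iff_of_adjacent hab hxb hxa)

theorem commonAbove_of_adjacent (hab : (r a : ℕ) = r b + 1) {q : Pref n} (hq : q b < q a) :
    commonAbove r q a = #{y | r y < r b ∧ q y < q a} + 1 := by
  rw [commonAbove, ← card_insert_of_notMem (a := b) (by simp)]
  congr 1
  ext y
  simp only [mem_filter, mem_univ, true_and, mem_insert, apply_lt_iff_of_adjacent hab]
  constructor
  · rintro ⟨h | rfl, hy⟩ <;> tauto
  · rintro (rfl | h) <;> tauto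

theorem commonAbove_swap_trans_left (hab : (r a : ℕ) = r b + 1) (q : Pref n) :
    commonAbove r ((Equiv.swap b a).trans q) b = #{y | r y < r b ∧ q y < q a} := by
  refine congrArg card (filter_congr fun y _ => and_congr_right fun hy => ?_)
  have hyb : y ≠ b := by rintro rfl; exact lt_irrefl _ hy
  have hya : y ≠ a := by rintro rfl; rw [Fin.lt_def] at hy; omega
  simp [Equiv.swap_apply_of_ne_of_ne hyb hya]

theorem commonAbove_swap_trans_right (hab : (r a : ℕ) = r b + 1) {q : Pref n} (hq : q b < q a) :
    commonAbove r ((Equiv.swap b a).trans q) a = commonAbove r q b := by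
  refine congrArg card (filter_congr fun y _ => ?_)
  rw [apply_lt_iff_of_adjacent hab]
  rcases eq_or_ne y b with rfl | hyb
  · simp [hq.not_gt]
  rcases eq_or_ne y a with rfl | hya
  · have : ¬r y < r b := by rw [Fin.lt_def]; omega
    simp [this, hyb]
  simp [Equiv.swap_apply_of_ne_of_ne hyb hya, hyb]

end Adjacent

theorem exists_pref_commonAbove (r : Pref n) {a b : Fin n} (hab : (r a : ℕ) = r b + 1)
    {β γ m : ℕ} (hmβ : m ≤ β) (hβγ : β < γ) (hm : m ≤ r b) (hγ : γ + r b < n + m) :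
    ∃ q : Pref n, (q b : ℕ) = β ∧ (q a : ℕ) = γ ∧ commonAbove r q b = m ∧
      commonAbove r q a = m + 1 := by
  obtain ⟨w, hw⟩ := exists_perm_val_eq_pairLayout hmβ hβγ hm hγ
  have hqb : (w (r b) : ℕ) = β := by rw [hw]; unfold pairLayout; split_ifs <;> omega
  have hqa : (w (r a) : ℕ) = γ := by rw [hw, hab]; unfold pairLayout; split_ifs <;> omega
  have hcount : ∀ c, m ≤ c → c ≤ γ → #{y | r y < r b ∧ (w (r y) : ℕ) < c} = m := by
    intro c hmc hcγ
    calc #{y | r y < r b ∧ (w (r y) : ℕ) < c} = #{y | (r y : ℕ) < m} := by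
          refine congrArg card (filter_congr fun y _ => ?_)
          rw [Fin.lt_def, hw]
          constructor
          · exact fun h => (pairLayout_lt_iff h.1 hmc hcγ).1 h.2
          · exact fun h => ⟨by omega, (pairLayout_lt_iff (by omega) hmc hcγ).2 h⟩
      _ = m := by rw [card_filter_val_apply_lt]; have := (r a).isLt; omega
  refine ⟨r.trans w, hqb, hqa, ?_, ?_⟩
  · simpa only [commonAbove, Equiv.trans_apply, Fin.lt_def (a := w (r _)), hqb]
      using hcount β hmβ hβγ.le
  · rw [commonAbove_of_adjacent hab (by simp only [Equiv.trans_apply, Fin.lt_def, hqa, hqb, hβγ])]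
    simpa only [Equiv.trans_apply, Fin.lt_def (a := w (r _)), hqa] using
      congrArg (· + 1) (hcount γ (hmβ.trans hβγ.le) le_rfl)

open Classical in
noncomputable def transferProfile (f : Pref n → Pref n → Fin n → ℝ) (r : Pref n) (x : Fin n)
    (k j : ℕ) : ℝ :=
  if h : ∃ q : Pref n, (q x : ℕ) = k ∧ commonAbove r q x = j then f r h.choose x else 0

theorem apply_eq_transferProfile (hsend : SenderInvariant f) (hrecv : ReceiverInvariant f)
    (r q : Pref n) (x : Fin n) : f r q x = transferProfile f r x (q x) (commonAbove r q x) := by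
  have h : ∃ q' : Pref n, (q' x : ℕ) = q x ∧ commonAbove r q' x = commonAbove r q x :=
    ⟨q, rfl, rfl⟩
  rw [transferProfile, dif_pos h]
  exact apply_eq_of_commonAbove_eq hsend hrecv (Fin.ext h.choose_spec.1).symm h.choose_spec.2.symm

theorem transferProfile_swap (hsend : SenderInvariant f) (hrecv : ReceiverInvariant f) {c : ℝ}
    (hc : ∀ r r' : Pref n, ∑ a, f r r' a = c) {r : Pref n} {a b : Fin n}
    (hab : (r a : ℕ) = r b + 1) {q : Pref n} (hq : q b < q a) {m : ℕ}
    (hm : commonAbove r q a = m + 1) :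
    transferProfile f r b (q b) (commonAbove r q b) + transferProfile f r a (q a) (m + 1) =
      transferProfile f r b (q a) m + transferProfile f r a (q b) (commonAbove r q b) := by
  have h := apply_swap_trans_add hrecv hc hab q
  rw [apply_eq_transferProfile hsend hrecv r _ b, apply_eq_transferProfile hsend hrecv r _ a,
    apply_eq_transferProfile hsend hrecv r q b, apply_eq_transferProfile hsend hrecv r q a,
    commonAbove_swap_trans_left hab, commonAbove_swap_trans_right hab hq,
    commonAbove_of_adjacent hab hq] at h
  rw [commonAbove_of_adjacent hab hq] at hm
  rw [Nat.add_right_cancel hm] at h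
  simpa using h.symm

theorem transferProfile_succ (hsend : SenderInvariant f) (hrecv : ReceiverInvariant f) {c : ℝ}
    (hc : ∀ r r' : Pref n, ∑ a, f r r' a = c) (r : Pref n) (a : Fin n) {t m : ℕ}
    (hmu : m + 1 ≤ r a) (hmt : m + 1 ≤ t) (hlow : (r a : ℕ) + t ≤ n - 1 + m) :
    transferProfile f r a t (m + 1) = transferProfile f r a t m := by
  set b := r.symm ⟨r a - 1, by omega⟩
  have hab : (r a : ℕ) = r b + 1 := by simp only [b, Equiv.apply_symm_apply]; omega
  have key : ∀ β γ, m ≤ β → β < γ → γ ≤ t + 1 →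
      transferProfile f r b β m + transferProfile f r a γ (m + 1) =
        transferProfile f r b γ m + transferProfile f r a β m := by
    intro β γ hmβ hβγ hγt
    obtain ⟨q, hqb, hqa, hcb, hca⟩ :=
      exists_pref_commonAbove r hab hmβ hβγ (by omega) (by have := (r a).isLt; omega)
    have := transferProfile_swap hsend hrecv hc hab (by rw [Fin.lt_def]; omega) hca
    rwa [hqb, hqa, hcb] at this
  linarith [key m t le_rfl (by omega) (by omega), key m (t + 1) le_rfl (by omega) le_rfl,
    key t (t + 1) (by omega) (by omega) le_rfl]

theorem transferProfile_eq_of_le (hsend : SenderInvariant f) (hrecv : ReceiverInvariant f)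
    {c : ℝ} (hc : ∀ r r' : Pref n, ∑ a, f r r' a = c) (r : Pref n) (a : Fin n) {t m₁ m₂ : ℕ}
    (h₁₂ : m₁ ≤ m₂) (hm₂u : m₂ ≤ r a) (hm₂t : m₂ ≤ t) (hlow : (r a : ℕ) + t ≤ n - 1 + m₁) :
    transferProfile f r a t m₁ = transferProfile f r a t m₂ := by
  induction m₂, h₁₂ using Nat.le_induction with
  | base => rfl
  | succ m hm ih =>
    rw [ih (by omega) (by omega),
      transferProfile_succ hsend hrecv hc r a hm₂u hm₂t (by omega)]

end

theorem transfer_depends_only_on_rank_general (n : ℕ)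
    (f : Pref n → Pref n → Fin n → ℝ) (hsend : SenderInvariant f)
    (hrecv : ReceiverInvariant f) (c : ℝ) (hc : ∀ r r' : Pref n, ∑ a, f r r' a = c) :
    ∀ (a : Fin n) (r r' r'' : Pref n), r' a = r'' a → f r r' a = f r r'' a := by
  intro a r r' r'' h
  wlog hle : commonAbove r r' a ≤ commonAbove r r'' a generalizing r' r''
  · exact (this r'' r' h.symm (le_of_not_ge hle)).symm
  have hlow := add_le_commonAbove r r' a
  rw [h] at hlow
  rw [apply_eq_transferProfile hsend hrecv r r' a, apply_eq_transferProfile hsend hrecv r r'' a, h]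
  exact transferProfile_eq_of_le hsend hrecv hc r a hle (commonAbove_le_left r r'' a)
    (commonAbove_le_right r r'' a) hlow

/-- A transfer function that is neutral, sender invariant, receiver invariant and
has constant total transfer depends, for fixed receiver preference, only on the
rank of the object in the sender's preference. -/
theorem transfer_depends_only_on_rank (n : ℕ) (hn : 3 ≤ n)
    (f : Pref n → Pref n → Fin n → ℝ) (hf : TransferBounded f)
    (hneutral : NeutralTransfer f) (hsend : SenderInvariant f)
    (hrecv : ReceiverInvariant f) (c : ℝ) (hc : ∀ r r' : Pref n, ∑ a, f r r' a = c) :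
    ∀ (a : Fin n) (r r' r'' : Pref n), r' a = r'' a → f r r' a = f r r'' a :=
  transfer_depends_only_on_rank_general n f hsend hrecv c hc
end

section
/- For any function f : R × R × O → [−1/n, 1/n], there exists a function g : {1,…,n} × {1,…,n} → [−1/n, 1/n] such that f(≻, ≻', a) = g(rank(≻,a), rank(≻',a)) for all ≻, ≻' ∈ R and all objects a, if and only if f is neutral and for every object a and all preferences ≻, ≻', ≻'' ∈ R: rank(≻',a) = rank(≻'',a) implies f(≻, ≻', a) = f(≻, ≻'', a). -/
open Finset

/-- A transfer function is representable through the ranks of the object in the two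
preferences iff it is neutral and depends, for fixed first argument, only on the
rank of the object in the second preference. -/
theorem rank_representation_iff (n : ℕ) (hn : 3 ≤ n)
    (f : Pref n → Pref n → Fin n → ℝ) (hf : TransferBounded f) :
    (∃ g : Fin n → Fin n → ℝ,
        (∀ i j, -(1 / (n : ℝ)) ≤ g i j ∧ g i j ≤ 1 / (n : ℝ)) ∧
        ∀ (r r' : Pref n) (a : Fin n), f r r' a = g (r a) (r' a)) ↔
      (NeutralTransfer f ∧
        ∀ (a : Fin n) (r r' r'' : Pref n), r' a = r'' a → f r r' a = f r r'' a) := by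
  constructor
  · rintro ⟨g, hgb, hg⟩
    constructor
    · intro r r' a π
      rw [hg, hg]
      have h1 : relabel π r (π a) = r a := by
        simp [relabel]
      have h2 : relabel π r' (π a) = r' a := by
        simp [relabel]
      rw [h1, h2]
    · intro a r r' r'' h
      rw [hg, hg, h]
  · rintro ⟨hN, hR⟩
    refine ⟨fun i j => f (Equiv.refl (Fin n)) (Equiv.swap i j) i, fun i j => hf _ _ _, ?_⟩
    intro r r' a
    have key := hN r r' a r
    have h1 : relabel r r = Equiv.refl (Fin n) := by
      ext x; simp [relabel]
    rw [h1] at key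
    rw [key]
    apply hR
    simp [relabel, Equiv.swap_apply_left]
end

section
/- Let n ≥ 1. A function g : {1,…,n} × {1,…,n} → ℝ satisfies g(i,i) = 0 for all i ∈ {1,…,n} and Σ_{i=1}^n g(i, π(i)) = 0 for every permutation π of {1,…,n}, if and only if there exists a vector v ∈ ℝ^n with v[n] = 0 such that g(i,j) = v[i] − v[j] for all i, j ∈ {1,…,n}, where v[k] denotes the k-th coordinate of v. -/
open Finset

/-- A function `g` on pairs of indices vanishes on the diagonal and sums to zero
along every permutation iff it is of the form `g i j = v i - v j` for a vector `v`
whose last coordinate is zero. -/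
theorem zero_sum_function_iff_linear (n : ℕ) (hn : 1 ≤ n) (g : Fin n → Fin n → ℝ) :
    ((∀ i, g i i = 0) ∧ ∀ π : Equiv.Perm (Fin n), ∑ i, g i (π i) = 0) ↔
      ∃ v : Fin n → ℝ, v ⟨n - 1, by omega⟩ = 0 ∧ ∀ i j, g i j = v i - v j := by
  constructor
  · rintro ⟨h0, hs⟩
    set L : Fin n := ⟨n - 1, by omega⟩ with hL
    -- antisymmetry
    have anti : ∀ i j : Fin n, i ≠ j → g j i = - g i j := by
      intro i j hij
      have := hs (Equiv.swap i j)
      have hsum : ∑ x, g x (Equiv.swap i j x) = ∑ x ∈ ({i, j} : Finset (Fin n)), g x (Equiv.swap i j x) := by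
        refine (Finset.sum_subset (Finset.subset_univ _) ?_).symm
        intro x _ hx
        simp only [Finset.mem_insert, Finset.mem_singleton, not_or] at hx
        rw [Equiv.swap_apply_of_ne_of_ne hx.1 hx.2]
        exact h0 x
      rw [hsum, Finset.sum_pair hij, Equiv.swap_apply_left, Equiv.swap_apply_right] at this
      linarith
    -- 3-cycle identity
    have tri : ∀ i j k : Fin n, i ≠ j → j ≠ k → i ≠ k →
        g i k + g j i + g k j = 0 := by
      intro i j k hij hjk hik
      set π : Equiv.Perm (Fin n) := Equiv.swap j k * Equiv.swap i j with hπ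
      have := hs π
      have hsum : ∑ x, g x (π x) = ∑ x ∈ ({i, j, k} : Finset (Fin n)), g x (π x) := by
        refine (Finset.sum_subset (Finset.subset_univ _) ?_).symm
        intro x _ hx
        simp only [Finset.mem_insert, Finset.mem_singleton, not_or] at hx
        have : π x = x := by
          simp only [hπ, Equiv.Perm.mul_apply]
          rw [Equiv.swap_apply_of_ne_of_ne hx.1 hx.2.1,
            Equiv.swap_apply_of_ne_of_ne hx.2.1 hx.2.2]
        rw [this]; exact h0 x
      have hmi : ({i, j, k} : Finset (Fin n)).sum (fun x => g x (π x)) =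
          g i (π i) + g j (π j) + g k (π k) := by
        rw [Finset.sum_insert (by simp [hij, hik]),
          Finset.sum_insert (by simp [hjk]), Finset.sum_singleton]
        ring
      have hpi : π i = k := by
        simp only [hπ, Equiv.Perm.mul_apply, Equiv.swap_apply_left]
      have hpj : π j = i := by
        simp only [hπ, Equiv.Perm.mul_apply, Equiv.swap_apply_right]
        exact Equiv.swap_apply_of_ne_of_ne hij hik
      have hpk : π k = j := by
        simp only [hπ, Equiv.Perm.mul_apply]
        rw [Equiv.swap_apply_of_ne_of_ne (Ne.symm hik) (Ne.symm hjk), Equiv.swap_apply_right]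
      rw [hsum, hmi, hpi, hpj, hpk] at this
      linarith
    refine ⟨fun i => g i L, h0 L, ?_⟩
    intro i j
    dsimp only
    by_cases hij : i = j
    · subst hij; rw [h0, sub_self]
    by_cases hjL : j = L
    · subst hjL; rw [h0, sub_zero]
    by_cases hiL : i = L
    · subst hiL
      have := anti j L hjL
      rw [h0]; linarith
    · have := tri i L j hiL (Ne.symm hjL) hij
      have h2 := anti i L hiL
      linarith
  · rintro ⟨v, hv, h⟩
    constructor
    · intro i; rw [h, sub_self]
    · intro π
      have : ∑ i, v (π i) = ∑ i, v i := Equiv.sum_comp π v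
      simp only [h, Finset.sum_sub_distrib, this, sub_self]
end
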